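/- arXiv:1601.06255 — 6 statements merged into one kernel-verified Lean document; each statement's English description precedes it below -/
import Mathlib

section
/- Let f₁(x,y) = x² + Σ_{i+j=3} a_{ij} x^i y^j and f₂(x,y) = y² + Σ_{i+j=3} b_{ij} x^i y^j be real polynomials. Then the map germ (x,y) ↦ (x + ½(−a₃₀+b₁₂)z − ½a₁₂w, y − ½b₂₁z + ½(a₂₁−b₀₃)w, z, w)/(1 + b₁₂x + a₂₁y) evaluated at (z,w) = (f₁(x,y), f₂(x,y)) has its first two components X, Y and last two components Z, W satisfying Z ≡ X² + a₀₃Y³ and W ≡ Y² + b₃₀X³ modulo terms of total degree ≥ 4 in (x,y). Equivalently, the 3-jet of any Monge form with 2-jet (x²,y²) is projectively equivalent to (x² + a₀₃y³, y² + b₃₀x³). -/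
/-!
Clearing the denominator `P`, the first component times `P³` is the polynomial
`N = g₁ P² - Q₁² P - C₁(Q₁, Q₂)`, where `C₁` is the cubic part of `f₁`. Since `Q₁ - x` and
`Q₂ - y` vanish to order 2, `C₁(Q₁, Q₂) ≡ C₁(x, y)` modulo order 4, and the linear part of `P`
together with the quadratic corrections in `Q₁` are exactly what makes the cubic terms of `N`
cancel. Reflecting in the diagonal `x ↔ y` (and `aᵢⱼ ↔ bⱼᵢ`) exchanges the two components.
-/

open Filter Asymptotics Topology

def VanishesToOrder {E 𝕜 : Type*} [SeminormedAddCommGroup E] [Norm 𝕜] (n : ℕ) (F : E → 𝕜) :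
    Prop :=
  F =O[𝓝 0] fun v => ‖v‖ ^ n

def binaryCubic {R : Type*} [CommRing R] (c30 c21 c12 c03 x y : R) : R :=
  c30 * x ^ 3 + c21 * x ^ 2 * y + c12 * x * y ^ 2 + c03 * y ^ 3

theorem ContinuousLinearMap.vanishesToOrder_one {E 𝕜 : Type*} [NontriviallyNormedField 𝕜]
    [SeminormedAddCommGroup E] [NormedSpace 𝕜 E] (ℓ : E →L[𝕜] 𝕜) : VanishesToOrder 1 ℓ := by
  simpa only [VanishesToOrder, pow_one] using (ℓ.isBigO_id _).norm_right

namespace VanishesToOrder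

variable {E E' 𝕜 : Type*} [SeminormedAddCommGroup E] [SeminormedAddCommGroup E'] [NormedField 𝕜]
  {m n : ℕ} {F G : E → 𝕜}

theorem congr' (hF : VanishesToOrder n F) (h : F =ᶠ[𝓝 0] G) : VanishesToOrder n G :=
  IsBigO.congr' hF h EventuallyEq.rfl

theorem congr_left (hF : VanishesToOrder n F) (h : ∀ v, F v = G v) : VanishesToOrder n G :=
  IsBigO.congr_left hF h

theorem mono (hF : VanishesToOrder n F) (h : m ≤ n) : VanishesToOrder m F := by
  refine IsBigO.trans hF ?_
  rcases h.eq_or_lt with rfl | h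
  · exact isBigO_refl _ _
  · exact (isLittleO_norm_pow_norm_pow h).isBigO

theorem add (hF : VanishesToOrder n F) (hG : VanishesToOrder n G) :
    VanishesToOrder n fun v => F v + G v :=
  IsBigO.add hF hG

theorem sub (hF : VanishesToOrder n F) (hG : VanishesToOrder n G) :
    VanishesToOrder n fun v => F v - G v :=
  IsBigO.sub hF hG

theorem const_mul (hF : VanishesToOrder n F) (c : 𝕜) : VanishesToOrder n fun v => c * F v :=
  IsBigO.const_mul_left hF c

theorem mul (hF : VanishesToOrder m F) (hG : VanishesToOrder n G) :
    VanishesToOrder (m + n) fun v => F v * G v := by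
  simpa only [VanishesToOrder, pow_add] using IsBigO.mul hF hG

theorem pow (hF : VanishesToOrder n F) (k : ℕ) : VanishesToOrder (n * k) fun v => F v ^ k := by
  simpa only [VanishesToOrder, pow_mul] using IsBigO.pow hF k

theorem of_continuousAt (hF : ContinuousAt F 0) : VanishesToOrder 0 F := by
  simpa only [VanishesToOrder, pow_zero] using hF.tendsto.isBigO_one ℝ

theorem comp (hF : VanishesToOrder n F) {φ : E' → E} (hφ : ∀ v, ‖φ v‖ = ‖v‖) :
    VanishesToOrder n (F ∘ φ) := by
  have hφ0 : Tendsto φ (𝓝 0) (𝓝 0) := by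
    rw [tendsto_zero_iff_norm_tendsto_zero]
    simpa only [hφ] using tendsto_norm_zero
  simpa only [VanishesToOrder, Function.comp_def, hφ] using IsBigO.comp_tendsto hF hφ0

theorem isLittleO (hF : VanishesToOrder (n + 1) F) : F =o[𝓝 0] fun v => ‖v‖ ^ n :=
  IsBigO.trans_isLittleO hF (isLittleO_norm_pow_norm_pow n.lt_succ_self)

theorem binaryCubic_add_sub (c30 c21 c12 c03 : 𝕜) {x y e f : E → 𝕜}
    (hx : VanishesToOrder 1 x) (hy : VanishesToOrder 1 y)
    (he : VanishesToOrder 2 e) (hf : VanishesToOrder 2 f) :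
    VanishesToOrder 4 fun v => binaryCubic c30 c21 c12 c03 (x v + e v) (y v + f v)
      - binaryCubic c30 c21 c12 c03 (x v) (y v) := by
  have hX := hx.add (he.mono one_le_two)
  have hY := hy.add (hf.mono one_le_two)
  -- the difference is `e * A + f * B` with `A`, `B` quadratic in `x, y, X = x + e, Y = y + f`
  have hA := ((((hX.mul hX).add (hX.mul hx)).add (hx.mul hx)).const_mul c30).add
    ((((hX.add hx).mul hY).const_mul c21).add ((hY.mul hY).const_mul c12))
  have hB := ((hx.mul hx).const_mul c21).add (((hx.mul (hY.add hy)).const_mul c12).add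
    ((((hY.mul hY).add (hY.mul hy)).add (hy.mul hy)).const_mul c03))
  exact ((he.mul hA).add (hf.mul hB)).congr_left fun v => by simp only [binaryCubic]; ring

end VanishesToOrder

theorem normalForm_firstComponent_vanishesToOrder_four (a30 a21 a12 a03 b30 b21 b12 b03 : ℝ)
    (f₁ g₁ g₂ P Q₁ Q₂ : ℝ × ℝ → ℝ)
    (hf₁ : f₁ = fun v => v.1 ^ 2 + a30 * v.1 ^ 3 + a21 * v.1 ^ 2 * v.2
      + a12 * v.1 * v.2 ^ 2 + a03 * v.2 ^ 3)
    (hg₁ : g₁ = fun v => v.1 ^ 2 + a03 * v.2 ^ 3)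
    (hg₂ : g₂ = fun v => v.2 ^ 2 + b30 * v.1 ^ 3)
    (hP : P = fun v => 1 + b12 * v.1 + a21 * v.2)
    (hQ₁ : Q₁ = fun v => v.1 + (-a30 + b12) / 2 * g₁ v - a12 / 2 * g₂ v)
    (hQ₂ : Q₂ = fun v => v.2 - b21 / 2 * g₁ v + (a21 - b03) / 2 * g₂ v) :
    VanishesToOrder 4 fun v => g₁ v / P v - f₁ (Q₁ v / P v, Q₂ v / P v) := by
  subst hf₁ hg₁ hg₂ hP hQ₁ hQ₂
  have hx : VanishesToOrder 1 fun v : ℝ × ℝ => v.1 :=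
    (ContinuousLinearMap.fst ℝ ℝ ℝ).vanishesToOrder_one
  have hy : VanishesToOrder 1 fun v : ℝ × ℝ => v.2 :=
    (ContinuousLinearMap.snd ℝ ℝ ℝ).vanishesToOrder_one
  have hg₁ := (hx.pow 2).add (((hy.pow 3).const_mul a03).mono (by norm_num))
  have hg₂ := (hy.pow 2).add (((hx.pow 3).const_mul b30).mono (by norm_num))
  have hL := (hx.const_mul b12).add (hy.const_mul a21)
  have hE₁ := (hg₁.const_mul ((-a30 + b12) / 2)).sub (hg₂.const_mul (a12 / 2))
  have hE₂ := (hg₂.const_mul ((a21 - b03) / 2)).sub (hg₁.const_mul (b21 / 2))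
  have hPc : ContinuousAt (fun v : ℝ × ℝ => 1 + b12 * v.1 + a21 * v.2) 0 := by fun_prop
  have hP := VanishesToOrder.of_continuousAt hPc
  have hPinv : VanishesToOrder 0 fun v : ℝ × ℝ => (1 + b12 * v.1 + a21 * v.2)⁻¹ :=
    .of_continuousAt (hPc.inv₀ (by simp))
  have hΔ := VanishesToOrder.binaryCubic_add_sub a30 a21 a12 a03 hx hy hE₁ hE₂
  -- with `L = P - 1` and `Eᵢ` the quadratic corrections in `Qᵢ`, the numerator `P³ · (…)` is
  -- `a₁₂b₃₀x⁴ + (a₃₀ - b₁₂)a₀₃xy³ + 2a₀₃y³L + g₁L² - 2xE₁L - E₁²P - (C₁(Q₁, Q₂) - C₁(x, y))`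
  have hN := (((((hx.pow 4).const_mul (a12 * b30)).add
    ((hx.mul (hy.pow 3)).const_mul ((a30 - b12) * a03))).add
    (((hy.pow 3).mul hL).const_mul (2 * a03))).add (hg₁.mul (hL.pow 2))).sub
    ((((hx.mul hE₁).mul hL).const_mul 2).add ((hE₁.pow 2).mul hP)) |>.sub hΔ
  refine (hN.mul (hPinv.pow 3)).congr' ?_
  have hP0 : ∀ᶠ v : ℝ × ℝ in 𝓝 0, 1 + b12 * v.1 + a21 * v.2 ≠ 0 := hPc.eventually_ne (by simp)
  filter_upwards [hP0] with v hv
  simp only [binaryCubic]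
  field_simp
  ring

/-- The 3-jet of a Monge form with 2-jet `(x², y²)` is projectively equivalent to
`(x² + a₀₃y³, y² + b₃₀x³)` via the explicit projective transformation with
`q₁ = x + ½(−a₃₀+b₁₂)z − ½a₁₂w`, `q₂ = y − ½b₂₁z + ½(a₂₁−b₀₃)w`, `q₃ = z`, `q₄ = w`,
`p = 1 + b₁₂x + a₂₁y`: along the graph `(x, y, g₁, g₂)` of the normal form the defining
functions `q₃/p − f₁(q₁/p, q₂/p)` and `q₄/p − f₂(q₁/p, q₂/p)` vanish modulo degree ≥ 4. -/
theorem jet3_hyperbolic_normal_form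
    (a30 a21 a12 a03 b30 b21 b12 b03 : ℝ)
    (f₁ f₂ g₁ g₂ P Q₁ Q₂ : ℝ × ℝ → ℝ)
    (hf₁ : f₁ = fun v => v.1 ^ 2 + a30 * v.1 ^ 3 + a21 * v.1 ^ 2 * v.2
      + a12 * v.1 * v.2 ^ 2 + a03 * v.2 ^ 3)
    (hf₂ : f₂ = fun v => v.2 ^ 2 + b30 * v.1 ^ 3 + b21 * v.1 ^ 2 * v.2
      + b12 * v.1 * v.2 ^ 2 + b03 * v.2 ^ 3)
    (hg₁ : g₁ = fun v => v.1 ^ 2 + a03 * v.2 ^ 3)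
    (hg₂ : g₂ = fun v => v.2 ^ 2 + b30 * v.1 ^ 3)
    (hP : P = fun v => 1 + b12 * v.1 + a21 * v.2)
    (hQ₁ : Q₁ = fun v => v.1 + (-a30 + b12) / 2 * g₁ v - a12 / 2 * g₂ v)
    (hQ₂ : Q₂ = fun v => v.2 - b21 / 2 * g₁ v + (a21 - b03) / 2 * g₂ v) :
    ((fun v : ℝ × ℝ => g₁ v / P v - f₁ (Q₁ v / P v, Q₂ v / P v))
        =o[𝓝 (0 : ℝ × ℝ)] fun v => ‖v‖ ^ 3) ∧
    ((fun v : ℝ × ℝ => g₂ v / P v - f₂ (Q₁ v / P v, Q₂ v / P v))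
        =o[𝓝 (0 : ℝ × ℝ)] fun v => ‖v‖ ^ 3) := by
  have hfirst := normalForm_firstComponent_vanishesToOrder_four a30 a21 a12 a03 b30 b21 b12 b03
    f₁ g₁ g₂ P Q₁ Q₂ hf₁ hg₁ hg₂ hP hQ₁ hQ₂
  have hswapped := normalForm_firstComponent_vanishesToOrder_four b03 b12 b21 b30 a03 a12 a21 a30
    (f₂ ∘ Prod.swap) (g₂ ∘ Prod.swap) (g₁ ∘ Prod.swap) (P ∘ Prod.swap) (Q₂ ∘ Prod.swap)
    (Q₁ ∘ Prod.swap)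
    (by subst hf₂; ext; simp only [Function.comp_apply, Prod.fst_swap, Prod.snd_swap]; ring)
    (by subst hg₂; rfl) (by subst hg₁; rfl)
    (by subst hP; ext; simp only [Function.comp_apply, Prod.fst_swap, Prod.snd_swap]; ring)
    (by subst hQ₂; ext; simp only [Function.comp_apply, Prod.snd_swap]; ring)
    (by subst hQ₁; ext; simp only [Function.comp_apply, Prod.fst_swap]; ring)
  exact ⟨hfirst.isLittleO,
    (hswapped.comp (LinearIsometryEquiv.prodComm ℝ ℝ ℝ).norm_map).isLittleO⟩
end

section
/- Suppose j²f = (xy, 0) with f₁ = xy + Σ_{i+j=3} a_{ij}x^i y^j + O(4), f₂ = Σ_{i+j=3} b_{ij}x^i y^j + O(4), and let p = (a, 0, 0, 0) ∈ ℝ⁴ with a ≠ 0. Then j³φ_{p,f} is A³-equivalent to (x, xy − (a₃₀/a)y³, b₂₁xy² − (b₃₀/a)y³). -/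
open Filter Asymptotics Topology

variable {E : Type*} [NormedAddCommGroup E]

lemma auxPowLe {m n : ℕ} (h : n ≤ m) :
    (fun v : E => ‖v‖ ^ m) =O[𝓝 0] fun v => ‖v‖ ^ n := by
  refine IsBigO.of_bound 1 ?_
  filter_upwards [Metric.ball_mem_nhds (0 : E) one_pos] with v hv
  rw [Metric.mem_ball, dist_zero_right] at hv
  have h0 : (0:ℝ) ≤ ‖v‖ := norm_nonneg v
  simp only [Real.norm_eq_abs, abs_pow, abs_norm, one_mul]
  exact pow_le_pow_of_le_one h0 hv.le h

lemma auxPowLt {m n : ℕ} (h : n < m) :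
    (fun v : E => ‖v‖ ^ m) =o[𝓝 0] fun v => ‖v‖ ^ n := by
  have h1 : (fun v : E => ‖v‖ ^ (n+1)) =o[𝓝 0] fun v => ‖v‖ ^ n := by
    rw [isLittleO_iff]
    intro c hc
    filter_upwards [Metric.ball_mem_nhds (0 : E) hc] with v hv
    rw [Metric.mem_ball, dist_zero_right] at hv
    have h0 : (0:ℝ) ≤ ‖v‖ ^ n := pow_nonneg (norm_nonneg v) n
    have : ‖(‖v‖ ^ (n+1))‖ = ‖v‖ ^ n * ‖v‖ := by
      simp [Real.norm_eq_abs, abs_pow, pow_succ]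
    rw [this]
    calc ‖v‖ ^ n * ‖v‖ ≤ ‖v‖ ^ n * c := mul_le_mul_of_nonneg_left hv.le h0
      _ = c * ‖v‖ ^ n := mul_comm _ _
      _ = c * ‖(‖v‖ ^ n)‖ := by simp [Real.norm_eq_abs, abs_pow]
  exact (auxPowLe h).trans_isLittleO h1

lemma auxO3 {f : E → ℝ} {m : ℕ} (hm : 3 < m) (h : f =O[𝓝 0] fun v => ‖v‖ ^ m) :
    f =o[𝓝 0] fun v : E => ‖v‖ ^ 3 :=
  h.trans_isLittleO (auxPowLt hm)

lemma auxO1 {f : E → ℝ} {m : ℕ} (hm : 1 < m) (h : f =O[𝓝 0] fun v => ‖v‖ ^ m) :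
    f =o[𝓝 0] fun v : E => ‖v‖ ^ 1 :=
  h.trans_isLittleO (auxPowLt hm)

lemma auxOmul {f g : E → ℝ} {m n : ℕ} (hf : f =O[𝓝 (0:E)] fun v => ‖v‖ ^ m)
    (hg : g =O[𝓝 (0:E)] fun v => ‖v‖ ^ n) :
    (fun v => f v * g v) =O[𝓝 (0:E)] fun v => ‖v‖ ^ (m + n) := by
  simpa [pow_add] using hf.mul hg

lemma auxContO0 {f : E → ℝ} (h : ContinuousAt f 0) :
    f =O[𝓝 0] fun v : E => ‖v‖ ^ 0 := by
  simpa using (h.tendsto).isBigO_one ℝ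

lemma monoO (c : ℝ) (i j : ℕ) :
    (fun v : ℝ × ℝ => c * v.1 ^ i * v.2 ^ j) =O[𝓝 0] fun v => ‖v‖ ^ (i + j) := by
  refine IsBigO.of_bound |c| (Eventually.of_forall fun v => ?_)
  have h1 : |v.1| ≤ ‖v‖ := by simpa using norm_fst_le v
  have h2 : |v.2| ≤ ‖v‖ := by simpa using norm_snd_le v
  have h0 : (0:ℝ) ≤ ‖v‖ := norm_nonneg v
  calc ‖c * v.1 ^ i * v.2 ^ j‖ = |c| * |v.1| ^ i * |v.2| ^ j := by
        simp [Real.norm_eq_abs, abs_mul, abs_pow]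
    _ ≤ |c| * ‖v‖ ^ i * ‖v‖ ^ j := by gcongr
    _ = |c| * ‖(‖v‖ ^ (i+j))‖ := by
        rw [pow_add, mul_assoc]
        simp [abs_of_nonneg (pow_nonneg h0 _)]

lemma xO : (fun v : ℝ × ℝ => v.1) =O[𝓝 0] fun v => ‖v‖ ^ 1 := by
  simpa using monoO 1 1 0

lemma yO : (fun v : ℝ × ℝ => v.2) =O[𝓝 0] fun v => ‖v‖ ^ 1 := by
  simpa using monoO 1 0 1

lemma fst3O : (fun u : ℝ × ℝ × ℝ => u.1) =O[𝓝 0] fun u => ‖u‖ ^ 1 := by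
  refine IsBigO.of_bound 1 (Eventually.of_forall fun u => ?_)
  simpa using norm_fst_le u

lemma snd3O : (fun u : ℝ × ℝ × ℝ => u.2.1) =O[𝓝 0] fun u => ‖u‖ ^ 1 := by
  refine IsBigO.of_bound 1 (Eventually.of_forall fun u => ?_)
  simpa using (norm_fst_le u.2).trans (norm_snd_le u)

lemma auxOd {f : E → ℝ} {m n : ℕ} (hn : n ≤ m) (h : f =O[𝓝 (0:E)] fun v => ‖v‖ ^ m) :
    f =O[𝓝 (0:E)] fun v => ‖v‖ ^ n :=
  h.trans (auxPowLe hn)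

lemma powxO (k : ℕ) : (fun v : ℝ × ℝ => v.1 ^ k) =O[𝓝 0] fun v => ‖v‖ ^ k := by
  simpa [← pow_mul, one_mul] using xO.pow k

lemma powyO (k : ℕ) : (fun v : ℝ × ℝ => v.2 ^ k) =O[𝓝 0] fun v => ‖v‖ ^ k := by
  simpa [← pow_mul, one_mul] using yO.pow k

lemma hC (c : ℝ) : (fun _ : ℝ × ℝ => c) =O[𝓝 (0 : ℝ × ℝ)] fun v => ‖v‖ ^ 0 :=
  auxContO0 continuousAt_const

lemma pow13O (k : ℕ) : (fun u : ℝ × ℝ × ℝ => u.1 ^ k) =O[𝓝 0] fun u => ‖u‖ ^ k := by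
  simpa [← pow_mul, one_mul] using fst3O.pow k

/-- `A³`-equivalence of two germs `(ℝ²,0) → (ℝ³,0)`. -/
def A3Equiv (g h : ℝ × ℝ → ℝ × ℝ × ℝ) : Prop :=
  ∃ (σ : ℝ × ℝ → ℝ × ℝ) (τ : ℝ × ℝ × ℝ → ℝ × ℝ × ℝ)
    (A : (ℝ × ℝ) ≃L[ℝ] ℝ × ℝ) (B : (ℝ × ℝ × ℝ) ≃L[ℝ] ℝ × ℝ × ℝ),
    σ 0 = 0 ∧ τ 0 = 0 ∧ ContDiff ℝ (⊤ : ℕ∞) σ ∧ ContDiff ℝ (⊤ : ℕ∞) τ ∧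
    HasFDerivAt σ (A : (ℝ × ℝ) →L[ℝ] ℝ × ℝ) 0 ∧
    HasFDerivAt τ (B : (ℝ × ℝ × ℝ) →L[ℝ] ℝ × ℝ × ℝ) 0 ∧
    (fun v => h (σ v) - τ (g v)) =o[𝓝 (0 : ℝ × ℝ)] fun v => ‖v‖ ^ 3

set_option maxHeartbeats 4000000 in
/-- Inflection case `j²f = (xy, 0)`: projecting from `p = (a,0,0,0)`, `a ≠ 0`, the 3-jet of
the central projection is `A³`-equivalent to
`(x, xy − (a₃₀/a)y³, b₂₁xy² − (b₃₀/a)y³)`. -/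
theorem central_projection_inflection_normal_form
    (a30 a21 a12 a03 b30 b21 b12 b03 a : ℝ) (ha : a ≠ 0)
    (f₁ f₂ : ℝ × ℝ → ℝ) (hf₁s : ContDiff ℝ (⊤ : ℕ∞) f₁) (hf₂s : ContDiff ℝ (⊤ : ℕ∞) f₂)
    (hf₁ : (fun v : ℝ × ℝ => f₁ v - (v.1 * v.2 + a30 * v.1 ^ 3 + a21 * v.1 ^ 2 * v.2
        + a12 * v.1 * v.2 ^ 2 + a03 * v.2 ^ 3)) =o[𝓝 (0 : ℝ × ℝ)] fun v => ‖v‖ ^ 3)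
    (hf₂ : (fun v : ℝ × ℝ => f₂ v - (b30 * v.1 ^ 3 + b21 * v.1 ^ 2 * v.2
        + b12 * v.1 * v.2 ^ 2 + b03 * v.2 ^ 3)) =o[𝓝 (0 : ℝ × ℝ)] fun v => ‖v‖ ^ 3)
    (φ : ℝ × ℝ → ℝ × ℝ × ℝ)
    (hφ : φ = fun v => (v.2 / (v.1 - a), f₁ v / (v.1 - a), f₂ v / (v.1 - a))) :
    A3Equiv φ (fun v => (v.1, v.1 * v.2 - (a30 / a) * v.2 ^ 3,
      b21 * v.1 * v.2 ^ 2 - (b30 / a) * v.2 ^ 3)) := by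
  -- the source diffeomorphism
  set S : ℝ × ℝ → ℝ := fun v => -(v.2/a) - v.1*v.2/a^2 - v.1^2*v.2/a^3 with hS
  set T : ℝ × ℝ → ℝ := fun v => v.1 + a21*v.1^2 + a12*v.1*v.2 + a03*v.2^2 with hT
  -- the linear source change
  let Alin : (ℝ × ℝ) ≃ₗ[ℝ] (ℝ × ℝ) :=
  { toFun := fun v => (-(v.2/a), v.1)
    map_add' := fun p q => by
      refine Prod.ext ?_ ?_ <;> simp <;> ring
    map_smul' := fun c p => by
      refine Prod.ext ?_ ?_ <;> simp <;> ring
    invFun := fun w => (w.2, -(a*w.1))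
    left_inv := fun p => by
      refine Prod.ext ?_ ?_ <;> simp
      field_simp
    right_inv := fun w => by
      refine Prod.ext ?_ ?_ <;> simp
      field_simp }
  refine ⟨fun v => (S v, T v),
    fun u => (u.1, u.2.1, u.2.2 + a*b12*u.1*u.2.1 - a^2*b03*u.1^3),
    Alin.toContinuousLinearEquiv,
    ContinuousLinearEquiv.refl ℝ (ℝ × ℝ × ℝ), ?_, ?_, ?_, ?_, ?_, ?_, ?_⟩
  · simp [hS, hT]
  · norm_num
  · -- smoothness of σ
    refine ContDiff.prodMk ?_ ?_
    · rw [hS]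
      exact (((contDiff_snd.div_const a).neg).sub
        ((contDiff_fst.mul contDiff_snd).div_const (a^2))).sub
        (((contDiff_fst.pow 2).mul contDiff_snd).div_const (a^3))
    · rw [hT]; fun_prop
  · -- smoothness of τ
    fun_prop
  · -- derivative of σ at 0
    rw [hasFDerivAt_iff_isLittleO_nhds_zero]
    have hcoe : ∀ v : ℝ × ℝ,
        (Alin.toContinuousLinearEquiv : (ℝ × ℝ) →L[ℝ] ℝ × ℝ) v = (-(v.2/a), v.1) := by
      intro v; rfl
    have he : (fun h : ℝ × ℝ => ((S (0+h), T (0+h)) : ℝ × ℝ) - (S 0, T 0)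
        - (Alin.toContinuousLinearEquiv : (ℝ × ℝ) →L[ℝ] ℝ × ℝ) h)
        = fun h : ℝ × ℝ => ((-(a^2)⁻¹ * h.1 ^ 1 * h.2 ^ 1 + -(a^3)⁻¹ * h.1 ^ 2 * h.2 ^ 1 : ℝ),
            (a21 * h.1 ^ 2 * h.2 ^ 0 + a12 * h.1 ^ 1 * h.2 ^ 1 + a03 * h.1 ^ 0 * h.2 ^ 2 : ℝ)) := by
      funext h
      rw [hcoe]
      refine Prod.ext ?_ ?_
      · simp [hS, hT, Prod.fst_sub, Prod.snd_sub]
        field_simp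
        ring
      · simp [hS, hT, Prod.fst_sub, Prod.snd_sub]
        ring
    rw [he]
    have h1 : (fun h : ℝ × ℝ => -(a^2)⁻¹ * h.1 ^ 1 * h.2 ^ 1 + -(a^3)⁻¹ * h.1 ^ 2 * h.2 ^ 1)
        =o[𝓝 (0:ℝ×ℝ)] fun h => ‖h‖ ^ 1 := by
      have e1 := monoO (-(a^2)⁻¹) 1 1
      have e2 := monoO (-(a^3)⁻¹) 2 1
      exact auxO1 (m := 2) (by norm_num)
        ((auxOd (n := 2) (by norm_num) e1).add (auxOd (n := 2) (by norm_num) e2))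
    have h2 : (fun h : ℝ × ℝ => a21 * h.1 ^ 2 * h.2 ^ 0 + a12 * h.1 ^ 1 * h.2 ^ 1 + a03 * h.1 ^ 0 * h.2 ^ 2)
        =o[𝓝 (0:ℝ×ℝ)] fun h => ‖h‖ ^ 1 := by
      have e1 := monoO a21 2 0
      have e2 := monoO a12 1 1
      have e3 := monoO a03 0 2
      exact auxO1 (m := 2) (by norm_num)
        (((auxOd (n := 2) (by norm_num) e1).add (auxOd (n := 2) (by norm_num) e2)).add
          (auxOd (n := 2) (by norm_num) e3))
    have := h1.prod_left h2
    refine this.trans_isBigO ?_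
    refine IsBigO.of_bound 1 (Eventually.of_forall fun v => ?_)
    simp
  · -- derivative of τ at 0
    rw [hasFDerivAt_iff_isLittleO_nhds_zero]
    have hR : (fun h : ℝ × ℝ × ℝ => ((0:ℝ), (0:ℝ), a*b12*h.1*h.2.1 - a^2*b03*h.1^3))
        =o[𝓝 (0:ℝ×ℝ×ℝ)] fun h => ‖h‖ ^ 1 := by
      refine IsLittleO.prod_left (isLittleO_zero _ _) ?_
      refine IsLittleO.prod_left (isLittleO_zero _ _) ?_
      have e1 : (fun h : ℝ × ℝ × ℝ => a*b12*h.1*h.2.1) =O[𝓝 0] fun h => ‖h‖ ^ (0+1+1) :=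
        auxOmul (auxOmul (auxContO0 continuousAt_const) fst3O) snd3O
      have e2 : (fun h : ℝ × ℝ × ℝ => a^2*b03*h.1^3) =O[𝓝 0] fun h => ‖h‖ ^ (0+3) :=
        auxOmul (auxContO0 continuousAt_const) (pow13O 3)
      exact auxO1 (m := 2) (by norm_num)
        ((auxOd (n := 2) (by norm_num) e1).sub (auxOd (n := 2) (by norm_num) e2))
    have hid : (fun h : ℝ × ℝ × ℝ => ‖h‖ ^ 1) =O[𝓝 (0:ℝ×ℝ×ℝ)] (fun h => h) := by
      refine IsBigO.of_bound 1 (Eventually.of_forall fun v => ?_)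
      simp
    refine (hR.trans_isBigO hid).congr' (Eventually.of_forall fun h => ?_) EventuallyEq.rfl
    refine Prod.ext ?_ (Prod.ext ?_ ?_) <;>
      simp [Prod.fst_sub, Prod.snd_sub] <;> ring
  · -- the main 3rd-order estimate
    subst hφ
    set E2 : ℝ × ℝ → ℝ := fun v => a21 * v.1 ^ 2 * v.2 ^ 0 + a12 * v.1 ^ 1 * v.2 ^ 1 + a03 * v.1 ^ 0 * v.2 ^ 2 with hE2
    set TRI : ℝ × ℝ → ℝ := fun v => a30 * v.1 ^ 2 * v.2 ^ 0 + a21 * v.1 ^ 1 * v.2 ^ 1 + a12 * v.1 ^ 0 * v.2 ^ 2 with hTRI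
    set UU : ℝ × ℝ → ℝ := fun v => -(a ^ 3)⁻¹ * (a ^ 2 + a * v.1 + v.1 ^ 2) with hUU
    set WW : ℝ × ℝ → ℝ := fun v => v.1 ^ 3 * ((a ^ 3)⁻¹ * (v.1 - a)⁻¹) with hWW
    set QQ1 : ℝ × ℝ → ℝ := fun v => v.2 * (v.1 + E2 v) + a30 * v.1 ^ 3 with hQQ1
    set CC1 : ℝ × ℝ → ℝ := fun v => v.1 * TRI v + a03 * v.2 ^ 3 with hCC1
    set QQ2 : ℝ × ℝ → ℝ := fun v => b30 * v.1 ^ 3 * v.2 ^ 0 + b21 * v.1 ^ 2 * v.2 ^ 1 + b12 * v.1 ^ 1 * v.2 ^ 2 + b03 * v.1 ^ 0 * v.2 ^ 3 with hQQ2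
    have hInvC : ContinuousAt (fun v : ℝ × ℝ => (v.1 - a)⁻¹) 0 := by
      refine ContinuousAt.inv₀ (by fun_prop) ?_
      simpa using neg_ne_zero.mpr ha
    have hInv : (fun v : ℝ × ℝ => (v.1 - a)⁻¹) =O[𝓝 0] fun v => ‖v‖ ^ 0 := auxContO0 hInvC
    have hNI : (fun v : ℝ × ℝ => -(v.1 - a)⁻¹) =O[𝓝 0] fun v => ‖v‖ ^ 0 := auxContO0 hInvC.neg
    have hRfac : (fun v : ℝ × ℝ => (-(a * b12)) * (v.2 * ((v.1 - a)⁻¹ * (v.1 - a)⁻¹))) =O[𝓝 0] fun v => ‖v‖ ^ 0 :=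
      auxContO0 (continuousAt_const.mul (continuousAt_snd.mul (hInvC.mul hInvC)))
    have hU : UU =O[𝓝 0] fun v => ‖v‖ ^ 0 := by rw [hUU]; exact auxContO0 (by fun_prop)
    have hAX : (fun v : ℝ × ℝ => a + v.1) =O[𝓝 0] fun v => ‖v‖ ^ 0 := auxContO0 (by fun_prop)
    have hBX : (fun v : ℝ × ℝ => 1 - a * UU v) =O[𝓝 0] fun v => ‖v‖ ^ 0 := by
      rw [hUU]; exact auxContO0 (by fun_prop)
    have hT2 : E2 =O[𝓝 0] fun v => ‖v‖ ^ 2 := by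
      rw [hE2]
      exact ((auxOd (by norm_num) (monoO a21 2 0)).add (auxOd (by norm_num) (monoO a12 1 1))).add (auxOd (by norm_num) (monoO a03 0 2))
    have hTri : TRI =O[𝓝 0] fun v => ‖v‖ ^ 2 := by
      rw [hTRI]
      exact ((auxOd (by norm_num) (monoO a30 2 0)).add (auxOd (by norm_num) (monoO a21 1 1))).add (auxOd (by norm_num) (monoO a12 0 2))
    have hTf : (fun v : ℝ × ℝ => v.1 + E2 v) =O[𝓝 0] fun v => ‖v‖ ^ 1 :=
      xO.add (auxOd (by norm_num) hT2)
    have hQ1 : QQ1 =O[𝓝 0] fun v => ‖v‖ ^ 2 := by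
      rw [hQQ1]
      exact (auxOd (by norm_num) (auxOmul yO hTf)).add (auxOd (by norm_num) (auxOmul (hC a30) (powxO 3)))
    have hC1 : CC1 =O[𝓝 0] fun v => ‖v‖ ^ 3 := by
      rw [hCC1]
      exact (auxOd (by norm_num) (auxOmul xO hTri)).add (auxOd (by norm_num) (auxOmul (hC a03) (powyO 3)))
    have hQ2 : QQ2 =O[𝓝 0] fun v => ‖v‖ ^ 3 := by
      rw [hQQ2]
      exact (((auxOd (by norm_num) (monoO b30 3 0)).add (auxOd (by norm_num) (monoO b21 2 1))).add (auxOd (by norm_num) (monoO b12 1 2))).add (auxOd (by norm_num) (monoO b03 0 3))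
    have hW : WW =O[𝓝 0] fun v => ‖v‖ ^ (3 + (0 + 0)) := by
      rw [hWW]; exact auxOmul (powxO 3) (auxOmul (hC ((a ^ 3)⁻¹)) hInv)
    have hc1t0 : (fun v : ℝ × ℝ => (v.1 ^ 3 * (v.2 * (-(a ^ 3)⁻¹ * (v.1 - a)⁻¹)))) =o[𝓝 (0 : ℝ × ℝ)] fun v => ‖v‖ ^ 3 :=
      auxO3 (by norm_num) (auxOmul (powxO 3) (auxOmul yO (auxOmul (hC (-(a ^ 3)⁻¹)) hInv)))
    have hc1 : (fun v : ℝ × ℝ => (v.1 ^ 3 * (v.2 * (-(a ^ 3)⁻¹ * (v.1 - a)⁻¹)))) =o[𝓝 (0 : ℝ × ℝ)] fun v => ‖v‖ ^ 3 :=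
      (hc1t0)
    have hc2t0 : (fun v : ℝ × ℝ => ((a30 * (a ^ 2)⁻¹) * v.1 ^ 4)) =o[𝓝 (0 : ℝ × ℝ)] fun v => ‖v‖ ^ 3 :=
      auxO3 (by norm_num) (auxOmul (hC (a30 * (a ^ 2)⁻¹)) (powxO 4))
    have hc2t1 : (fun v : ℝ × ℝ => ((a30 * (a ^ 3)⁻¹) * v.1 ^ 5)) =o[𝓝 (0 : ℝ × ℝ)] fun v => ‖v‖ ^ 3 :=
      auxO3 (by norm_num) (auxOmul (hC (a30 * (a ^ 3)⁻¹)) (powxO 5))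
    have hc2t2 : (fun v : ℝ × ℝ => ((-(3 * a30 * a⁻¹)) * (v.1 ^ 2 * E2 v))) =o[𝓝 (0 : ℝ × ℝ)] fun v => ‖v‖ ^ 3 :=
      auxO3 (by norm_num) (auxOmul (hC (-(3 * a30 * a⁻¹))) (auxOmul (powxO 2) hT2))
    have hc2t3 : (fun v : ℝ × ℝ => ((-(3 * a30 * a⁻¹)) * (v.1 * (E2 v * E2 v)))) =o[𝓝 (0 : ℝ × ℝ)] fun v => ‖v‖ ^ 3 :=
      auxO3 (by norm_num) (auxOmul (hC (-(3 * a30 * a⁻¹))) (auxOmul xO (auxOmul hT2 hT2)))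
    have hc2t4 : (fun v : ℝ × ℝ => ((-(a30 * a⁻¹)) * (E2 v * (E2 v * E2 v)))) =o[𝓝 (0 : ℝ × ℝ)] fun v => ‖v‖ ^ 3 :=
      auxO3 (by norm_num) (auxOmul (hC (-(a30 * a⁻¹))) (auxOmul hT2 (auxOmul hT2 hT2)))
    have hc2t5 : (fun v : ℝ × ℝ => ((-(a ^ 3)⁻¹) * (QQ1 v * (v.1 ^ 3 * (v.1 - a)⁻¹)))) =o[𝓝 (0 : ℝ × ℝ)] fun v => ‖v‖ ^ 3 :=
      auxO3 (by norm_num) (auxOmul (hC (-(a ^ 3)⁻¹)) (auxOmul hQ1 (auxOmul (powxO 3) hInv)))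
    have hc2t6 : (fun v : ℝ × ℝ => ((f₁ v - (v.1 * v.2 + a30 * v.1 ^ 3 + a21 * v.1 ^ 2 * v.2 + a12 * v.1 * v.2 ^ 2 + a03 * v.2 ^ 3)) * -(v.1 - a)⁻¹)) =o[𝓝 (0 : ℝ × ℝ)] fun v => ‖v‖ ^ 3 :=
      by simpa using hf₁.mul_isBigO hNI
    have hc2 : (fun v : ℝ × ℝ => ((a30 * (a ^ 2)⁻¹) * v.1 ^ 4) + ((a30 * (a ^ 3)⁻¹) * v.1 ^ 5) + ((-(3 * a30 * a⁻¹)) * (v.1 ^ 2 * E2 v)) + ((-(3 * a30 * a⁻¹)) * (v.1 * (E2 v * E2 v))) + ((-(a30 * a⁻¹)) * (E2 v * (E2 v * E2 v))) + ((-(a ^ 3)⁻¹) * (QQ1 v * (v.1 ^ 3 * (v.1 - a)⁻¹))) + ((f₁ v - (v.1 * v.2 + a30 * v.1 ^ 3 + a21 * v.1 ^ 2 * v.2 + a12 * v.1 * v.2 ^ 2 + a03 * v.2 ^ 3)) * -(v.1 - a)⁻¹)) =o[𝓝 (0 : ℝ × ℝ)] fun v => ‖v‖ ^ 3 :=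
      (((((((hc2t0).add (hc2t1)).add (hc2t2)).add (hc2t3)).add (hc2t4)).add (hc2t5)).add (hc2t6))
    have hc3t0 : (fun v : ℝ × ℝ => ((2 * b21) * (v.2 * (v.1 * (E2 v * UU v))))) =o[𝓝 (0 : ℝ × ℝ)] fun v => ‖v‖ ^ 3 :=
      auxO3 (by norm_num) (auxOmul (hC (2 * b21)) (auxOmul yO (auxOmul xO (auxOmul hT2 hU))))
    have hc3t1 : (fun v : ℝ × ℝ => (b21 * (v.2 * (E2 v * (E2 v * UU v))))) =o[𝓝 (0 : ℝ × ℝ)] fun v => ‖v‖ ^ 3 :=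
      auxO3 (by norm_num) (auxOmul (hC b21) (auxOmul yO (auxOmul hT2 (auxOmul hT2 hU))))
    have hc3t2 : (fun v : ℝ × ℝ => ((b30 * (a ^ 2)⁻¹) * v.1 ^ 4)) =o[𝓝 (0 : ℝ × ℝ)] fun v => ‖v‖ ^ 3 :=
      auxO3 (by norm_num) (auxOmul (hC (b30 * (a ^ 2)⁻¹)) (powxO 4))
    have hc3t3 : (fun v : ℝ × ℝ => ((b30 * (a ^ 3)⁻¹) * v.1 ^ 5)) =o[𝓝 (0 : ℝ × ℝ)] fun v => ‖v‖ ^ 3 :=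
      auxO3 (by norm_num) (auxOmul (hC (b30 * (a ^ 3)⁻¹)) (powxO 5))
    have hc3t4 : (fun v : ℝ × ℝ => ((-(3 * b30 * a⁻¹)) * (v.1 ^ 2 * E2 v))) =o[𝓝 (0 : ℝ × ℝ)] fun v => ‖v‖ ^ 3 :=
      auxO3 (by norm_num) (auxOmul (hC (-(3 * b30 * a⁻¹))) (auxOmul (powxO 2) hT2))
    have hc3t5 : (fun v : ℝ × ℝ => ((-(3 * b30 * a⁻¹)) * (v.1 * (E2 v * E2 v)))) =o[𝓝 (0 : ℝ × ℝ)] fun v => ‖v‖ ^ 3 :=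
      auxO3 (by norm_num) (auxOmul (hC (-(3 * b30 * a⁻¹))) (auxOmul xO (auxOmul hT2 hT2)))
    have hc3t6 : (fun v : ℝ × ℝ => ((-(b30 * a⁻¹)) * (E2 v * (E2 v * E2 v)))) =o[𝓝 (0 : ℝ × ℝ)] fun v => ‖v‖ ^ 3 :=
      auxO3 (by norm_num) (auxOmul (hC (-(b30 * a⁻¹))) (auxOmul hT2 (auxOmul hT2 hT2)))
    have hc3t7 : (fun v : ℝ × ℝ => ((b12 * (a ^ 2)⁻¹) * (v.1 ^ 2 * (v.2 ^ 2 * (UU v * (a + v.1)))))) =o[𝓝 (0 : ℝ × ℝ)] fun v => ‖v‖ ^ 3 :=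
      auxO3 (by norm_num) (auxOmul (hC (b12 * (a ^ 2)⁻¹)) (auxOmul (powxO 2) (auxOmul (powyO 2) (auxOmul hU hAX))))
    have hc3t8 : (fun v : ℝ × ℝ => ((-(a * b12)) * (v.2 * (CC1 v * (UU v * UU v))))) =o[𝓝 (0 : ℝ × ℝ)] fun v => ‖v‖ ^ 3 :=
      auxO3 (by norm_num) (auxOmul (hC (-(a * b12))) (auxOmul yO (auxOmul hC1 (auxOmul hU hU))))
    have hc3t9 : (fun v : ℝ × ℝ => ((b03 * (a ^ 2)⁻¹) * (v.1 * (v.2 ^ 3 * (UU v * ((1 - a * UU v) * (a + v.1))))))) =o[𝓝 (0 : ℝ × ℝ)] fun v => ‖v‖ ^ 3 :=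
      auxO3 (by norm_num) (auxOmul (hC (b03 * (a ^ 2)⁻¹)) (auxOmul xO (auxOmul (powyO 3) (auxOmul hU (auxOmul hBX hAX)))))
    have hc3t10 : (fun v : ℝ × ℝ => ((-1 : ℝ) * (QQ2 v * WW v))) =o[𝓝 (0 : ℝ × ℝ)] fun v => ‖v‖ ^ 3 :=
      auxO3 (by norm_num) (auxOmul (hC (-1 : ℝ)) (auxOmul hQ2 hW))
    have hc3t11 : (fun v : ℝ × ℝ => ((-(2 * a * b12)) * (v.2 * (QQ1 v * (UU v * WW v))))) =o[𝓝 (0 : ℝ × ℝ)] fun v => ‖v‖ ^ 3 :=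
      auxO3 (by norm_num) (auxOmul (hC (-(2 * a * b12))) (auxOmul yO (auxOmul hQ1 (auxOmul hU hW))))
    have hc3t12 : (fun v : ℝ × ℝ => ((-(a * b12)) * (v.2 * (QQ1 v * (WW v * WW v))))) =o[𝓝 (0 : ℝ × ℝ)] fun v => ‖v‖ ^ 3 :=
      auxO3 (by norm_num) (auxOmul (hC (-(a * b12))) (auxOmul yO (auxOmul hQ1 (auxOmul hW hW))))
    have hc3t13 : (fun v : ℝ × ℝ => ((3 * a ^ 2 * b03) * (v.2 ^ 3 * (UU v * (UU v * WW v))))) =o[𝓝 (0 : ℝ × ℝ)] fun v => ‖v‖ ^ 3 :=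
      auxO3 (by norm_num) (auxOmul (hC (3 * a ^ 2 * b03)) (auxOmul (powyO 3) (auxOmul hU (auxOmul hU hW))))
    have hc3t14 : (fun v : ℝ × ℝ => ((3 * a ^ 2 * b03) * (v.2 ^ 3 * (UU v * (WW v * WW v))))) =o[𝓝 (0 : ℝ × ℝ)] fun v => ‖v‖ ^ 3 :=
      auxO3 (by norm_num) (auxOmul (hC (3 * a ^ 2 * b03)) (auxOmul (powyO 3) (auxOmul hU (auxOmul hW hW))))
    have hc3t15 : (fun v : ℝ × ℝ => ((a ^ 2 * b03) * (v.2 ^ 3 * (WW v * (WW v * WW v))))) =o[𝓝 (0 : ℝ × ℝ)] fun v => ‖v‖ ^ 3 :=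
      auxO3 (by norm_num) (auxOmul (hC (a ^ 2 * b03)) (auxOmul (powyO 3) (auxOmul hW (auxOmul hW hW))))
    have hc3t16 : (fun v : ℝ × ℝ => ((f₂ v - (b30 * v.1 ^ 3 + b21 * v.1 ^ 2 * v.2 + b12 * v.1 * v.2 ^ 2 + b03 * v.2 ^ 3)) * -(v.1 - a)⁻¹)) =o[𝓝 (0 : ℝ × ℝ)] fun v => ‖v‖ ^ 3 :=
      by simpa using hf₂.mul_isBigO hNI
    have hc3t17 : (fun v : ℝ × ℝ => ((f₁ v - (v.1 * v.2 + a30 * v.1 ^ 3 + a21 * v.1 ^ 2 * v.2 + a12 * v.1 * v.2 ^ 2 + a03 * v.2 ^ 3)) * ((-(a * b12)) * (v.2 * ((v.1 - a)⁻¹ * (v.1 - a)⁻¹))))) =o[𝓝 (0 : ℝ × ℝ)] fun v => ‖v‖ ^ 3 :=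
      by simpa using hf₁.mul_isBigO hRfac
    have hc3 : (fun v : ℝ × ℝ => ((2 * b21) * (v.2 * (v.1 * (E2 v * UU v)))) + (b21 * (v.2 * (E2 v * (E2 v * UU v)))) + ((b30 * (a ^ 2)⁻¹) * v.1 ^ 4) + ((b30 * (a ^ 3)⁻¹) * v.1 ^ 5) + ((-(3 * b30 * a⁻¹)) * (v.1 ^ 2 * E2 v)) + ((-(3 * b30 * a⁻¹)) * (v.1 * (E2 v * E2 v))) + ((-(b30 * a⁻¹)) * (E2 v * (E2 v * E2 v))) + ((b12 * (a ^ 2)⁻¹) * (v.1 ^ 2 * (v.2 ^ 2 * (UU v * (a + v.1))))) + ((-(a * b12)) * (v.2 * (CC1 v * (UU v * UU v)))) + ((b03 * (a ^ 2)⁻¹) * (v.1 * (v.2 ^ 3 * (UU v * ((1 - a * UU v) * (a + v.1)))))) + ((-1 : ℝ) * (QQ2 v * WW v)) + ((-(2 * a * b12)) * (v.2 * (QQ1 v * (UU v * WW v)))) + ((-(a * b12)) * (v.2 * (QQ1 v * (WW v * WW v)))) + ((3 * a ^ 2 * b03) * (v.2 ^ 3 * (UU v * (UU v * WW v)))) +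 ((3 * a ^ 2 * b03) * (v.2 ^ 3 * (UU v * (WW v * WW v)))) + ((a ^ 2 * b03) * (v.2 ^ 3 * (WW v * (WW v * WW v)))) + ((f₂ v - (b30 * v.1 ^ 3 + b21 * v.1 ^ 2 * v.2 + b12 * v.1 * v.2 ^ 2 + b03 * v.2 ^ 3)) * -(v.1 - a)⁻¹) + ((f₁ v - (v.1 * v.2 + a30 * v.1 ^ 3 + a21 * v.1 ^ 2 * v.2 + a12 * v.1 * v.2 ^ 2 + a03 * v.2 ^ 3)) * ((-(a * b12)) * (v.2 * ((v.1 - a)⁻¹ * (v.1 - a)⁻¹))))) =o[𝓝 (0 : ℝ × ℝ)] fun v => ‖v‖ ^ 3 :=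
      ((((((((((((((((((hc3t0).add (hc3t1)).add (hc3t2)).add (hc3t3)).add (hc3t4)).add (hc3t5)).add (hc3t6)).add (hc3t7)).add (hc3t8)).add (hc3t9)).add (hc3t10)).add (hc3t11)).add (hc3t12)).add (hc3t13)).add (hc3t14)).add (hc3t15)).add (hc3t16)).add (hc3t17))
    have hRo : (fun v : ℝ × ℝ => (((v.1 ^ 3 * (v.2 * (-(a ^ 3)⁻¹ * (v.1 - a)⁻¹))) : ℝ), (((a30 * (a ^ 2)⁻¹) * v.1 ^ 4) + ((a30 * (a ^ 3)⁻¹) * v.1 ^ 5) + ((-(3 * a30 * a⁻¹)) * (v.1 ^ 2 * E2 v)) + ((-(3 * a30 * a⁻¹)) * (v.1 * (E2 v * E2 v))) + ((-(a30 * a⁻¹)) * (E2 v * (E2 v * E2 v))) + ((-(a ^ 3)⁻¹) * (QQ1 v * (v.1 ^ 3 * (v.1 - a)⁻¹))) + ((f₁ v - (v.1 * v.2 + a30 * v.1 ^ 3 + a21 * v.1 ^ 2 * v.2 + a12 * v.1 * v.2 ^ 2 + a03 * v.2 ^ 3)) * -(v.1 - a)⁻¹) : ℝ), (((2 * b21)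 * (v.2 * (v.1 * (E2 v * UU v)))) + (b21 * (v.2 * (E2 v * (E2 v * UU v)))) + ((b30 * (a ^ 2)⁻¹) * v.1 ^ 4) + ((b30 * (a ^ 3)⁻¹) * v.1 ^ 5) + ((-(3 * b30 * a⁻¹)) * (v.1 ^ 2 * E2 v)) + ((-(3 * b30 * a⁻¹)) * (v.1 * (E2 v * E2 v))) + ((-(b30 * a⁻¹)) * (E2 v * (E2 v * E2 v))) + ((b12 * (a ^ 2)⁻¹) * (v.1 ^ 2 * (v.2 ^ 2 * (UU v * (a + v.1))))) + ((-(a * b12)) * (v.2 * (CC1 v * (UU v * UU v)))) + ((b03 * (a ^ 2)⁻¹) * (v.1 * (v.2 ^ 3 * (UU v * ((1 - a * UU v) * (a + v.1)))))) + ((-1 : ℝ) * (QQ2 v * WW v)) + ((-(2 * a * b12)) * (v.2 * (QQ1 v * (UU v * WW v)))) + ((-(a * b12)) * (v.2 * (QQ1 v * (WW v * WW v)))) + ((3 * a ^ 2 * b03) * (v.2 ^ 3 * (UU v * (UU v * WW v)))) + ((3 * a ^ 2 * b03) * (v.2 ^ 3 * (UU v * (WW v * WW v)))) + ((a ^ 2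 * b03) * (v.2 ^ 3 * (WW v * (WW v * WW v)))) + ((f₂ v - (b30 * v.1 ^ 3 + b21 * v.1 ^ 2 * v.2 + b12 * v.1 * v.2 ^ 2 + b03 * v.2 ^ 3)) * -(v.1 - a)⁻¹) + ((f₁ v - (v.1 * v.2 + a30 * v.1 ^ 3 + a21 * v.1 ^ 2 * v.2 + a12 * v.1 * v.2 ^ 2 + a03 * v.2 ^ 3)) * ((-(a * b12)) * (v.2 * ((v.1 - a)⁻¹ * (v.1 - a)⁻¹)))) : ℝ))) =o[𝓝 (0 : ℝ × ℝ)] fun v => ‖v‖ ^ 3 :=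
      hc1.prod_left (hc2.prod_left hc3)
    have hne : ∀ᶠ v : ℝ × ℝ in 𝓝 0, v.1 - a ≠ 0 := by
      have hcont : ContinuousAt (fun v : ℝ × ℝ => v.1 - a) 0 := by fun_prop
      exact hcont.eventually_ne (by simpa using neg_ne_zero.mpr ha)
    refine hRo.congr' ?_ EventuallyEq.rfl
    filter_upwards [hne] with v hv
    refine Prod.ext ?_ (Prod.ext ?_ ?_)
    · simp only [hS, hT, hE2, hTRI, hUU, hWW, hQQ1, hCC1, hQQ2, Prod.fst_sub, Prod.snd_sub]
      field_simp
      ring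
    · simp only [hS, hT, hE2, hTRI, hUU, hWW, hQQ1, hCC1, hQQ2, Prod.fst_sub, Prod.snd_sub]
      field_simp
      ring
    · simp only [hS, hT, hE2, hTRI, hUU, hWW, hQQ1, hCC1, hQQ2, Prod.fst_sub, Prod.snd_sub]
      field_simp
      ring
end

section
/- Let f₁ = x² + a₁₂xy² + a₀₃y³ + O(4) and f₂ = xy + b̄₁₂xy² + b₀₃y³ + O(4) with a₀₃ = 0 and a₁₂ ≠ 0. Then the projective transformation given by q₁ = a₁₂x + a₁₂b₁₂w, q₂ = y, q₃ = a₁₂²z, q₄ = a₁₂w, p = 1 + 2b₁₂y transforms the 3-jet into (x² + xy², xy + γy³) with γ = b₀₃/a₁₂, modulo terms of degree ≥ 4. -/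
/-!
Put `b₀₃ = a₁₂γ`. Over the common denominator `p³`, each error term of the statement becomes a
polynomial in which every monomial of degree `≤ 3` cancels, so it is a sum of monomials `xⁱyʲ`
with `i + j ≥ 4` times polynomial cofactors; such a sum is `o(‖v‖³)`, and dividing by `p³`
preserves this since `p → 1` at the origin.
-/
open Filter Asymptotics Topology

theorem isBigO_fst_pow_mul_snd_pow {𝕜 : Type*} [NormedField 𝕜] (i j : ℕ) :
    (fun v : 𝕜 × 𝕜 => v.1 ^ i * v.2 ^ j) =O[𝓝 0] fun v => ‖v‖ ^ (i + j) := by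
  refine isBigO_of_le _ fun v => ?_
  rw [norm_mul, norm_pow, norm_pow, norm_pow, norm_norm, pow_add]
  gcongr
  exacts [norm_fst_le v, norm_snd_le v]

theorem isLittleO_norm_pow_of_isBigO_mul {E F : Type*} [NormedAddCommGroup E] [NormedRing F]
    {f h : E → F} {m n : ℕ} (hf : f =O[𝓝 0] fun v => ‖v‖ ^ m) (hh : h =O[𝓝 0] fun _ => (1 : ℝ))
    (hn : n < m) : (fun v => f v * h v) =o[𝓝 0] fun v => ‖v‖ ^ n := by
  simpa using (hf.trans_isLittleO (isLittleO_norm_pow_norm_pow hn)).mul_isBigO hh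

theorem Asymptotics.IsLittleO.div_of_tendsto {α 𝕜 : Type*} [NormedField 𝕜] {l : Filter α}
    {f P : α → 𝕜} {g : α → ℝ} {c : 𝕜} (hf : f =o[l] g) (hP : Tendsto P l (𝓝 c)) (hc : c ≠ 0) :
    (fun x => f x / P x) =o[l] g := by
  simpa [div_eq_mul_inv] using hf.mul_isBigO ((hP.inv₀ hc).isBigO_one ℝ)

theorem Continuous.isBigO_one_nhds {E : Type*} [TopologicalSpace E] {h : E → ℝ}
    (hh : Continuous h) (x : E) : h =O[𝓝 x] fun _ => (1 : ℝ) :=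
  (hh.tendsto x).isBigO_one ℝ

namespace ParabolicJet

/- `numerator₁ a b γ v / p³` and `numerator₂ a b γ v / p³`, with `p = 1 + 2by`, are the two error
terms of the statement for `a₁₂ = a`, `b₁₂ = b`, `b₀₃ = aγ`. -/
def numerator₁ (a b γ : ℝ) (v : ℝ × ℝ) : ℝ :=
  v.1 * v.2 ^ 3 * (a ^ 2 * b * (3 - 2 * γ + (4 * b - 6 * b * γ) * v.2 - 4 * b ^ 2 * γ * v.2 ^ 2))
    - v.1 ^ 2 * v.2 ^ 2 * (a ^ 2 * b ^ 2 * (1 + 2 * b * v.2))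
    - v.2 ^ 5 * (a ^ 2 * b * γ * (1 + b * γ * v.2 + 2 * b ^ 2 * γ * v.2 ^ 2))

def numerator₂ (a b γ : ℝ) (v : ℝ × ℝ) : ℝ :=
  v.1 * v.2 ^ 3 * (a * b ^ 2) + v.2 ^ 4 * (a * b * γ * (3 + b * v.2))

theorem numerator₁_isLittleO (a b γ : ℝ) :
    numerator₁ a b γ =o[𝓝 0] fun v => ‖v‖ ^ 3 := by
  unfold numerator₁
  exact ((isLittleO_norm_pow_of_isBigO_mul (m := 4)
        (by simpa using isBigO_fst_pow_mul_snd_pow (𝕜 := ℝ) 1 3)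
        (Continuous.isBigO_one_nhds (by fun_prop) 0) (by norm_num)).sub
      (isLittleO_norm_pow_of_isBigO_mul (m := 4)
        (by simpa using isBigO_fst_pow_mul_snd_pow (𝕜 := ℝ) 2 2)
        (Continuous.isBigO_one_nhds (by fun_prop) 0) (by norm_num))).sub
      (isLittleO_norm_pow_of_isBigO_mul (m := 5)
        (by simpa using isBigO_fst_pow_mul_snd_pow (𝕜 := ℝ) 0 5)
        (Continuous.isBigO_one_nhds (by fun_prop) 0) (by norm_num))

theorem numerator₂_isLittleO (a b γ : ℝ) :
    numerator₂ a b γ =o[𝓝 0] fun v => ‖v‖ ^ 3 := by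
  unfold numerator₂
  exact (isLittleO_norm_pow_of_isBigO_mul (m := 4)
        (by simpa using isBigO_fst_pow_mul_snd_pow (𝕜 := ℝ) 1 3)
        (Continuous.isBigO_one_nhds (by fun_prop) 0) (by norm_num)).add
      (isLittleO_norm_pow_of_isBigO_mul (m := 4)
        (by simpa using isBigO_fst_pow_mul_snd_pow (𝕜 := ℝ) 0 4)
        (Continuous.isBigO_one_nhds (by fun_prop) 0) (by norm_num))

end ParabolicJet

/-- Parabolic case with `a₀₃ = 0`, `a₁₂ ≠ 0`: the projective transformation with
`q₁ = a₁₂x + a₁₂b₁₂w`, `q₂ = y`, `q₃ = a₁₂²z`, `q₄ = a₁₂w`, `p = 1 + 2b₁₂y` transforms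
the 3-jet of `(x² + a₁₂xy², xy + b₁₂xy² + b₀₃y³)` into `(x² + xy², xy + γy³)` with
`γ = b₀₃/a₁₂`, modulo degree ≥ 4 along the graph of the target. -/
theorem jet3_parabolic_P_normal_form
    (a12 b12 b03 : ℝ) (ha12 : a12 ≠ 0)
    (γ : ℝ) (hγ : γ = b03 / a12)
    (f₁ f₂ g₁ g₂ P Q₁ Q₂ Q₃ Q₄ : ℝ × ℝ → ℝ)
    (hf₁ : f₁ = fun v => v.1 ^ 2 + a12 * v.1 * v.2 ^ 2)
    (hf₂ : f₂ = fun v => v.1 * v.2 + b12 * v.1 * v.2 ^ 2 + b03 * v.2 ^ 3)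
    (hg₁ : g₁ = fun v => v.1 ^ 2 + v.1 * v.2 ^ 2)
    (hg₂ : g₂ = fun v => v.1 * v.2 + γ * v.2 ^ 3)
    (hQ₁ : Q₁ = fun v => a12 * v.1 + a12 * b12 * g₂ v)
    (hQ₂ : Q₂ = fun v => v.2)
    (hQ₃ : Q₃ = fun v => a12 ^ 2 * g₁ v)
    (hQ₄ : Q₄ = fun v => a12 * g₂ v)
    (hP : P = fun v => 1 + 2 * b12 * v.2) :
    ((fun v : ℝ × ℝ => Q₃ v / P v - f₁ (Q₁ v / P v, Q₂ v / P v))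
        =o[𝓝 (0 : ℝ × ℝ)] fun v => ‖v‖ ^ 3) ∧
    ((fun v : ℝ × ℝ => Q₄ v / P v - f₂ (Q₁ v / P v, Q₂ v / P v))
        =o[𝓝 (0 : ℝ × ℝ)] fun v => ‖v‖ ^ 3) := by
  obtain rfl : b03 = a12 * γ := by rw [hγ, mul_div_cancel₀ _ ha12]
  subst hf₁ hf₂ hg₁ hg₂ hQ₁ hQ₂ hQ₃ hQ₄ hP
  have hP : Tendsto (fun v : ℝ × ℝ => 1 + 2 * b12 * v.2) (𝓝 0) (𝓝 1) := by
    simpa using ((by fun_prop : Continuous fun v : ℝ × ℝ => 1 + 2 * b12 * v.2).tendsto 0)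
  have hP3 : Tendsto (fun v : ℝ × ℝ => (1 + 2 * b12 * v.2) ^ 3) (𝓝 0) (𝓝 1) := by
    simpa using hP.pow 3
  have hPne := hP.eventually_ne one_ne_zero
  constructor
  · refine ((ParabolicJet.numerator₁_isLittleO a12 b12 γ).div_of_tendsto hP3 one_ne_zero).congr'
      ?_ .rfl
    filter_upwards [hPne] with v hv
    simp only [ParabolicJet.numerator₁]
    field_simp
    ring
  · refine ((ParabolicJet.numerator₂_isLittleO a12 b12 γ).div_of_tendsto hP3 one_ne_zero).congr'
      ?_ .rfl
    filter_upwards [hPne] with v hv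
    simp only [ParabolicJet.numerator₂]
    field_simp
    ring
end

section
/- For the Monge form with 2-jet (x² − y², xy) (elliptic type), there is no asymptotic line at the origin: for every line ℓ through the origin in the xy-plane, there exists a view point p on ℓ such that the 3-jet (indeed 2-jet) of the central projection φ_{p,f} is A-equivalent to the crosscap (x, y², xy) or better (not worse than S₀). -/
open Filter Asymptotics Topology

/-- `A²`-equivalence of two germs `(ℝ²,0) → (ℝ³,0)`: their 2-jets agree after composing
with (jets of) diffeomorphism germs of source and target. -/
def A2Equiv (g h : ℝ × ℝ → ℝ × ℝ × ℝ) : Prop :=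
  ∃ (σ : ℝ × ℝ → ℝ × ℝ) (τ : ℝ × ℝ × ℝ → ℝ × ℝ × ℝ)
    (A : (ℝ × ℝ) ≃L[ℝ] ℝ × ℝ) (B : (ℝ × ℝ × ℝ) ≃L[ℝ] ℝ × ℝ × ℝ),
    σ 0 = 0 ∧ τ 0 = 0 ∧ ContDiff ℝ (⊤ : ℕ∞) σ ∧ ContDiff ℝ (⊤ : ℕ∞) τ ∧
    HasFDerivAt σ (A : (ℝ × ℝ) →L[ℝ] ℝ × ℝ) 0 ∧
    HasFDerivAt τ (B : (ℝ × ℝ × ℝ) →L[ℝ] ℝ × ℝ × ℝ) 0 ∧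
    (fun v => h (σ v) - τ (g v)) =o[𝓝 (0 : ℝ × ℝ)] fun v => ‖v‖ ^ 2

/-- Central projection of the Monge form `(f₁, f₂)` from the finite view point
`(p₁, p₂, 0, 0)` of the tangent plane, as a germ `(ℝ²,0) → (ℝ³,0)` (using the chart
adapted to whether `p₁ = 0`). -/
noncomputable def projFin (p₁ p₂ : ℝ) (f₁ f₂ : ℝ × ℝ → ℝ) : ℝ × ℝ → ℝ × ℝ × ℝ :=
  if p₁ = 0 then
    fun v => (v.1 / (v.2 - p₂), f₁ v / (v.2 - p₂), f₂ v / (v.2 - p₂))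
  else
    fun v => ((v.2 - p₂) / (v.1 - p₁) - p₂ / p₁, f₁ v / (v.1 - p₁), f₂ v / (v.1 - p₁))

/-- Central projection of the Monge form `(f₁, f₂)` from the view point at infinity
`[a; b; 0; 0; 0]` of a tangent line of direction `(a, b)`. -/
noncomputable def projInf (a b : ℝ) (f₁ f₂ : ℝ × ℝ → ℝ) : ℝ × ℝ → ℝ × ℝ × ℝ :=
  if a = 0 then fun v => (v.1, f₁ v, f₂ v)
  else fun v => (v.2 - (b / a) * v.1, f₁ v, f₂ v)

/-- `g` is the central projection of `(f₁, f₂)` from some view point on the tangent line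
through the origin with direction `(a, b)` (a finite point or the point at infinity). -/
noncomputable def IsProjFromLine (a b : ℝ) (f₁ f₂ : ℝ × ℝ → ℝ)
    (g : ℝ × ℝ → ℝ × ℝ × ℝ) : Prop :=
  (∃ t : ℝ, t ≠ 0 ∧ g = projFin (t * a) (t * b) f₁ f₂) ∨ g = projInf a b f₁ f₂

/-- The crosscap (`S₀`) normal form `(x, y², xy)`. -/
def crosscap : ℝ × ℝ → ℝ × ℝ × ℝ := fun v => (v.1, v.2 ^ 2, v.1 * v.2)

/-- A regular (immersion) germ normal form `(x, y, 0)`. -/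
def regularGerm : ℝ × ℝ → ℝ × ℝ × ℝ := fun v => (v.1, v.2, 0)


open ContinuousLinearMap

noncomputable section

/-- linear map (u,p,q) ↦ (u, α p + β q, α' p + β' q) -/
def Lmap (α β α' β' : ℝ) : (ℝ × ℝ × ℝ) →L[ℝ] ℝ × ℝ × ℝ :=
  (fst ℝ ℝ (ℝ × ℝ)).prod
    (((α • (fst ℝ ℝ ℝ).comp (snd ℝ ℝ (ℝ × ℝ))) + β • (snd ℝ ℝ ℝ).comp (snd ℝ ℝ (ℝ × ℝ))).prod
     ((α' • (fst ℝ ℝ ℝ).comp (snd ℝ ℝ (ℝ × ℝ))) + β' • (snd ℝ ℝ ℝ).comp (snd ℝ ℝ (ℝ × ℝ))))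

@[simp] lemma Lmap_apply (α β α' β' : ℝ) (w : ℝ × ℝ × ℝ) :
    Lmap α β α' β' w = (w.1, α * w.2.1 + β * w.2.2, α' * w.2.1 + β' * w.2.2) := by
  simp [Lmap, ContinuousLinearMap.prod_apply, smul_eq_mul]

/-- the equiv when the determinant αβ' − βα' ≠ 0 -/
def Lequiv (α β α' β' : ℝ) (h : α * β' - β * α' ≠ 0) : (ℝ × ℝ × ℝ) ≃L[ℝ] ℝ × ℝ × ℝ :=
  ContinuousLinearEquiv.equivOfInverse (Lmap α β α' β')
    (Lmap (β' / (α * β' - β * α')) (-β / (α * β' - β * α'))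
          (-α' / (α * β' - β * α')) (α / (α * β' - β * α')))
    (fun w => by
      have h1 : β' * α - β * α' ≠ 0 := by rwa [mul_comm β' α]
      have h2 : -(α' * β) + α * β' ≠ 0 := by rwa [neg_add_eq_sub, mul_comm α' β]
      ext <;> simp <;> field_simp <;> ring_nf <;> field_simp)
    (fun w => by
      have h2 : -(α' * β) + β' * α ≠ 0 := by rwa [neg_add_eq_sub, mul_comm α' β, mul_comm β' α]
      ext <;> simp <;> field_simp <;> ring_nf <;> field_simp)

@[simp] lemma Lequiv_coe (α β α' β' : ℝ) (h : α * β' - β * α' ≠ 0) :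
    (Lequiv α β α' β' h : (ℝ × ℝ × ℝ) →L[ℝ] ℝ × ℝ × ℝ) = Lmap α β α' β' := rfl

/-- source shear (x,y) ↦ (y − c x, x) -/
def Smap (c : ℝ) : (ℝ × ℝ) →L[ℝ] ℝ × ℝ :=
  ((snd ℝ ℝ ℝ) - c • (fst ℝ ℝ ℝ)).prod (fst ℝ ℝ ℝ)

@[simp] lemma Smap_apply (c : ℝ) (v : ℝ × ℝ) : Smap c v = (v.2 - c * v.1, v.1) := by
  simp [Smap, smul_eq_mul]

def Sequiv (c : ℝ) : (ℝ × ℝ) ≃L[ℝ] ℝ × ℝ :=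
  ContinuousLinearEquiv.equivOfInverse (Smap c)
    (((snd ℝ ℝ ℝ)).prod ((fst ℝ ℝ ℝ) + c • (snd ℝ ℝ ℝ)))
    (fun v => by ext <;> simp [smul_eq_mul] <;> ring)
    (fun v => by ext <;> simp [smul_eq_mul] <;> ring)

@[simp] lemma Sequiv_coe (c : ℝ) : (Sequiv c : (ℝ × ℝ) →L[ℝ] ℝ × ℝ) = Smap c := rfl

lemma hasFDerivAt_quad (L : (ℝ × ℝ × ℝ) →L[ℝ] ℝ × ℝ × ℝ) (m m' : ℝ) :
    HasFDerivAt (fun w : ℝ × ℝ × ℝ => L w + ((0 : ℝ), m * w.1 ^ 2, m' * w.1 ^ 2)) L 0 := by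
  have h1 : HasFDerivAt (fun w : ℝ × ℝ × ℝ => w.1 ^ 2) (0 : (ℝ × ℝ × ℝ) →L[ℝ] ℝ) 0 := by
    have := (hasFDerivAt_fst (𝕜 := ℝ) (p := (0 : ℝ × ℝ × ℝ))).mul
      (hasFDerivAt_fst (𝕜 := ℝ) (p := (0 : ℝ × ℝ × ℝ)))
    refine (this.congr_fderiv ?_).congr_of_eventuallyEq (Eventually.of_forall fun w => by simp [pow_two])
    ext <;> simp
  have hq : HasFDerivAt (fun w : ℝ × ℝ × ℝ => ((0 : ℝ), m * w.1 ^ 2, m' * w.1 ^ 2))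
      (0 : (ℝ × ℝ × ℝ) →L[ℝ] ℝ × ℝ × ℝ) 0 := by
    have := (hasFDerivAt_const (0 : ℝ) (0 : ℝ × ℝ × ℝ)).prodMk
      ((h1.const_mul m).prodMk (h1.const_mul m'))
    refine this.congr_fderiv ?_
    ext w <;> simp
  exact (L.hasFDerivAt.add hq).congr_fderiv (by simp)

lemma a2equiv_shear (f₁ f₂ : ℝ × ℝ → ℝ)
    (hf₁ : (fun v : ℝ × ℝ => f₁ v - (v.1 ^ 2 - v.2 ^ 2))
      =o[𝓝 (0 : ℝ × ℝ)] fun v => ‖v‖ ^ 2)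
    (hf₂ : (fun v : ℝ × ℝ => f₂ v - v.1 * v.2)
      =o[𝓝 (0 : ℝ × ℝ)] fun v => ‖v‖ ^ 2) (c : ℝ) :
    A2Equiv (fun v => (v.2 - c * v.1, f₁ v, f₂ v)) crosscap := by
  have hd0 : (1 + c ^ 2 : ℝ) ≠ 0 := by positivity
  have hdet : (1 / (1 + c ^ 2)) * ((1 - c ^ 2) / (1 + c ^ 2)) -
      (2 * c / (1 + c ^ 2)) * (-c / (1 + c ^ 2)) ≠ 0 := by
    have key : (1 / (1 + c ^ 2)) * ((1 - c ^ 2) / (1 + c ^ 2)) -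
        (2 * c / (1 + c ^ 2)) * (-c / (1 + c ^ 2)) = (1 + c ^ 2) / (1 + c ^ 2) ^ 2 := by
      field_simp
      ring
    rw [key]
    positivity
  refine ⟨fun v => Smap c v,
    fun w => Lmap (1 / (1 + c ^ 2)) (2 * c / (1 + c ^ 2)) (-c / (1 + c ^ 2))
        ((1 - c ^ 2) / (1 + c ^ 2)) w +
      ((0 : ℝ), (1 / (1 + c ^ 2)) * w.1 ^ 2, (-c / (1 + c ^ 2)) * w.1 ^ 2),
    Sequiv c, Lequiv (1 / (1 + c ^ 2)) (2 * c / (1 + c ^ 2)) (-c / (1 + c ^ 2))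
        ((1 - c ^ 2) / (1 + c ^ 2)) hdet,
    by simp, by simp, (Smap c).contDiff,
    (Lmap _ _ _ _).contDiff.add (by fun_prop),
    (Smap c).hasFDerivAt, hasFDerivAt_quad _ _ _, ?_⟩
  have combo := (isLittleO_zero (E' := ℝ) (g' := fun v : ℝ × ℝ => ‖v‖ ^ 2)
      (l := 𝓝 (0 : ℝ × ℝ))).prod_left
    (((hf₁.const_mul_left (-(1 / (1 + c ^ 2)))).add
        (hf₂.const_mul_left (-(2 * c / (1 + c ^ 2))))).prod_left
     ((hf₁.const_mul_left (c / (1 + c ^ 2))).add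
        (hf₂.const_mul_left (-((1 - c ^ 2) / (1 + c ^ 2))))))
  refine combo.congr' (Eventually.of_forall fun v => ?_) EventuallyEq.rfl
  simp only [crosscap, Smap_apply, Lmap_apply, Prod.mk_sub_mk, Prod.mk_add_mk, Prod.ext_iff]
  refine ⟨by ring, ?_, ?_⟩ <;> · field_simp; ring

/-- Elliptic case `j²f = (x² − y², xy)`: there is no asymptotic line at the origin.  For
every tangent line through the origin there is a view point on it from which the central
projection is `A`-equivalent (already on the level of 2-jets) to the crosscap or to a
regular germ. -/
theorem elliptic_no_asymptotic_line
    (f₁ f₂ : ℝ × ℝ → ℝ) (hf₁s : ContDiff ℝ (⊤ : ℕ∞) f₁) (hf₂s : ContDiff ℝ (⊤ : ℕ∞) f₂)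
    (hf₁ : (fun v : ℝ × ℝ => f₁ v - (v.1 ^ 2 - v.2 ^ 2))
      =o[𝓝 (0 : ℝ × ℝ)] fun v => ‖v‖ ^ 2)
    (hf₂ : (fun v : ℝ × ℝ => f₂ v - v.1 * v.2)
      =o[𝓝 (0 : ℝ × ℝ)] fun v => ‖v‖ ^ 2)
    (a b : ℝ) (hab : (a, b) ≠ (0, 0)) :
    ∃ g : ℝ × ℝ → ℝ × ℝ × ℝ, IsProjFromLine a b f₁ f₂ g ∧
      (A2Equiv g crosscap ∨ A2Equiv g regularGerm) := by
  refine ⟨projInf a b f₁ f₂, Or.inr rfl, Or.inl ?_⟩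
  by_cases ha : a = 0
  · -- projection (x, f₁, f₂)
    refine ⟨id, fun w => Lmap (-1) 0 0 1 w + ((0 : ℝ), 1 * w.1 ^ 2, 0 * w.1 ^ 2),
      ContinuousLinearEquiv.refl ℝ (ℝ × ℝ), Lequiv (-1) 0 0 1 (by norm_num),
      rfl, by simp, contDiff_id, (Lmap (-1) 0 0 1).contDiff.add (by fun_prop),
      by simpa using hasFDerivAt_id (0 : ℝ × ℝ),
      hasFDerivAt_quad _ 1 0, ?_⟩
    have combo := (isLittleO_zero (E' := ℝ) (g' := fun v : ℝ × ℝ => ‖v‖ ^ 2)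
        (l := 𝓝 (0 : ℝ × ℝ))).prod_left (hf₁.prod_left hf₂.neg_left)
    refine combo.congr' (Eventually.of_forall fun v => ?_) EventuallyEq.rfl
    simp only [projInf, ha, if_true, crosscap, id_eq, Lmap_apply, Prod.mk_sub_mk,
      Prod.mk_add_mk, Prod.ext_iff]
    refine ⟨by ring, by ring, by ring⟩
  · -- projection (y − (b/a)x, f₁, f₂)
    have hg : projInf a b f₁ f₂ = fun v => (v.2 - (b / a) * v.1, f₁ v, f₂ v) := by
      simp [projInf, ha]
    rw [hg]
    exact a2equiv_shear f₁ f₂ hf₁ hf₂ (b / a)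

end
end

section
/- For the Monge form with 2-jet (x², xy) (parabolic type), the y-axis (x = 0) is the unique asymptotic line at the origin: for every view point p on the y-axis the central projection φ_{p,f} has 2-jet A²-equivalent to a singularity worse than the crosscap, while for every other line ℓ ≠ {x = 0} through the origin in the xy-plane there exists p ∈ ℓ with φ_{p,f} A-equivalent to the crosscap (x, y², xy) or a regular map. -/
open Filter Asymptotics Topology

/-! ### Auxiliary lemmas -/

/-- Restricting a little-o estimate on `ℝ²` to the `y`-axis. -/
private lemma curve_o {F : Type*} [NormedAddCommGroup F] {G : ℝ × ℝ → F}
    (h : G =o[𝓝 (0 : ℝ × ℝ)] fun v => ‖v‖ ^ 2) :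
    (fun y : ℝ => G (0, y)) =o[𝓝 (0 : ℝ)] fun y => y ^ 2 := by
  have hc : Continuous fun y : ℝ => ((0 : ℝ), y) := by continuity
  have ht : Tendsto (fun y : ℝ => ((0 : ℝ), y)) (𝓝 0) (𝓝 (0 : ℝ × ℝ)) := by
    simpa [Prod.mk_zero_zero] using hc.tendsto 0
  have h2 := h.comp_tendsto ht
  have he : (fun y : ℝ => ‖((0 : ℝ), y)‖ ^ 2) = fun y : ℝ => y ^ 2 := by
    funext y
    rw [Prod.norm_def, norm_zero, Real.norm_eq_abs, max_eq_right (abs_nonneg y), sq_abs]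
  rw [← he]
  exact h2

private lemma o_fst {α F G : Type*} {l : Filter α} [NormedAddCommGroup F]
    [NormedAddCommGroup G] {f : α → F × G} {k : α → ℝ} (h : f =o[l] k) :
    (fun x => (f x).1) =o[l] k :=
  (IsBigO.of_bound 1 (Filter.Eventually.of_forall fun x => by
    simpa using norm_fst_le (f x))).trans_isLittleO h

private lemma o_snd {α F G : Type*} {l : Filter α} [NormedAddCommGroup F]
    [NormedAddCommGroup G] {f : α → F × G} {k : α → ℝ} (h : f =o[l] k) :
    (fun x => (f x).2) =o[l] k :=
  (IsBigO.of_bound 1 (Filter.Eventually.of_forall fun x => by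
    simpa using norm_snd_le (f x))).trans_isLittleO h

private lemma sq_bigO : (fun y : ℝ => y ^ 2) =O[𝓝 (0 : ℝ)] fun y => y := by
  apply IsBigO.of_bound 1
  filter_upwards [Metric.closedBall_mem_nhds (0 : ℝ) one_pos] with y hy
  rw [Metric.mem_closedBall, Real.dist_eq, sub_zero] at hy
  rw [Real.norm_eq_abs, Real.norm_eq_abs, abs_pow, one_mul, pow_two]
  exact mul_le_of_le_one_left (abs_nonneg y) hy

private lemma o_of_sq {s : ℝ → ℝ} (h : (fun y => s y ^ 2) =o[𝓝 (0 : ℝ)] fun y => y ^ 2) :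
    s =o[𝓝 (0 : ℝ)] fun y => y := by
  rw [isLittleO_iff]
  intro ε hε
  filter_upwards [h.def (show (0 : ℝ) < ε ^ 2 by positivity)] with y hy
  rw [Real.norm_eq_abs, Real.norm_eq_abs, abs_pow, abs_pow] at hy
  rw [Real.norm_eq_abs, Real.norm_eq_abs]
  nlinarith [abs_nonneg (s y), abs_nonneg y, hε.le, sq_nonneg (|s y| - ε * |y|),
    sq_nonneg (|s y| + ε * |y|), mul_nonneg hε.le (abs_nonneg y)]

private lemma eq_zero_of_smul_o {F : Type*} [NormedAddCommGroup F] [NormedSpace ℝ F] {w : F}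
    (h : (fun y : ℝ => y • w) =o[𝓝 (0 : ℝ)] fun y => y) : w = 0 := by
  by_contra hw
  have hw' : 0 < ‖w‖ := norm_pos_iff.mpr hw
  have h2 := h.def (half_pos hw')
  rw [Metric.eventually_nhds_iff] at h2
  obtain ⟨δ, hδ, hb⟩ := h2
  have hmem : dist (δ / 2) (0 : ℝ) < δ := by
    rw [Real.dist_eq, sub_zero, abs_of_pos (by linarith)]; linarith
  have h3 := hb hmem
  rw [norm_smul, Real.norm_eq_abs] at h3
  have habs : |δ / 2| = δ / 2 := abs_of_pos (by linarith)
  rw [habs] at h3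
  nlinarith

/-- If the projection germ vanishes to second order along the `y`-axis, the derivative
argument rules out `A²`-equivalence with any germ whose restriction to curves detects
the kernel direction. -/
private lemma finish_contradiction {σ : ℝ × ℝ → ℝ × ℝ} {A : (ℝ × ℝ) ≃L[ℝ] ℝ × ℝ}
    (hσ0 : σ 0 = 0) (hσd : HasFDerivAt σ (A : (ℝ × ℝ) →L[ℝ] ℝ × ℝ) 0)
    (h1 : (fun y : ℝ => (σ (0, y)).1) =o[𝓝 (0 : ℝ)] fun y => y)
    (h2 : (fun y : ℝ => (σ (0, y)).2) =o[𝓝 (0 : ℝ)] fun y => y) : False := by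
  set w : ℝ × ℝ := A (0, 1) with hw
  -- derivative of y ↦ σ (0, y) at 0 is y ↦ y • w
  have hσd' : (fun h : ℝ × ℝ => σ (0 + h) - σ 0 - A h) =o[𝓝 (0 : ℝ × ℝ)] fun h => h :=
    hasFDerivAt_iff_isLittleO_nhds_zero.mp hσd
  have hcurve : (fun y : ℝ => σ (0, y) - y • w) =o[𝓝 (0 : ℝ)] fun y => y := by
    have hc : Continuous fun y : ℝ => ((0 : ℝ), y) := by continuity
    have ht : Tendsto (fun y : ℝ => ((0 : ℝ), y)) (𝓝 0) (𝓝 (0 : ℝ × ℝ)) := by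
      simpa [Prod.mk_zero_zero] using hc.tendsto 0
    have h3 := hσd'.comp_tendsto ht
    have h4 : (fun y : ℝ => (((0 : ℝ), y) : ℝ × ℝ)) =O[𝓝 (0 : ℝ)] fun y => y := by
      apply IsBigO.of_bound 1
      filter_upwards with y
      have hnn : ‖(((0 : ℝ), y) : ℝ × ℝ)‖ = ‖y‖ := by
        rw [Prod.norm_def]; simp
      rw [hnn, one_mul]
    have h5 := h3.trans_isBigO (h4.congr_left fun y => rfl)
    refine h5.congr_left fun y => ?_
    have e2 : (A : (ℝ × ℝ) →L[ℝ] ℝ × ℝ) ((0 : ℝ), y) = y • w := by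
      have e3 : (((0 : ℝ), y) : ℝ × ℝ) = y • (((0 : ℝ), (1 : ℝ)) : ℝ × ℝ) := by simp
      rw [e3, map_smul, hw]
      rfl
    show σ (0 + ((0 : ℝ), y)) - σ 0 - (A : (ℝ × ℝ) →L[ℝ] ℝ × ℝ) ((0 : ℝ), y)
        = σ (0, y) - y • w
    rw [zero_add, hσ0, sub_zero, e2]
  have hs : (fun y : ℝ => σ (0, y)) =o[𝓝 (0 : ℝ)] fun y => y := by
    have := h1.prod_left h2
    exact this.congr_left fun y => rfl
  have hsmul : (fun y : ℝ => y • w) =o[𝓝 (0 : ℝ)] fun y => y := by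
    have := hs.sub hcurve
    exact this.congr_left fun y => by abel
  have hw0 : w = 0 := eq_zero_of_smul_o hsmul
  have h01 : (((0 : ℝ), (1 : ℝ)) : ℝ × ℝ) = 0 :=
    A.map_eq_zero_iff.mp (by rw [← hw]; exact hw0)
  exact one_ne_zero (congrArg Prod.snd h01)

/-- Key lemma: a germ vanishing to second order along the `y`-axis is not
`A²`-equivalent to the crosscap nor to a regular germ. -/
private lemma no_A2 {g : ℝ × ℝ → ℝ × ℝ × ℝ}
    (hg : (fun y : ℝ => g (0, y)) =o[𝓝 (0 : ℝ)] fun y => y ^ 2) :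
    ¬ (A2Equiv g crosscap ∨ A2Equiv g regularGerm) := by
  have main : ∀ h : ℝ × ℝ → ℝ × ℝ × ℝ, A2Equiv g h →
      ∃ (σ : ℝ × ℝ → ℝ × ℝ) (A : (ℝ × ℝ) ≃L[ℝ] ℝ × ℝ),
        σ 0 = 0 ∧ HasFDerivAt σ (A : (ℝ × ℝ) →L[ℝ] ℝ × ℝ) 0 ∧
        (fun y : ℝ => h (σ (0, y))) =o[𝓝 (0 : ℝ)] fun y => y ^ 2 := by
    rintro h ⟨σ, τ, A, B, hσ0, hτ0, hσs, hτs, hσd, hτd, ho⟩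
    refine ⟨σ, A, hσ0, hσd, ?_⟩
    have h1 := curve_o ho
    -- τ ∘ (g on the y-axis) is o(y²)
    obtain ⟨K, t, ht, hK⟩ := (hτs.contDiffAt.of_le (by simp)).exists_lipschitzOnWith
    have hy2 : Tendsto (fun y : ℝ => y ^ 2) (𝓝 0) (𝓝 (0 : ℝ)) := by
      have := (continuous_pow 2 (M := ℝ)).tendsto 0
      simpa using this
    have hg0 : Tendsto (fun y : ℝ => g (0, y)) (𝓝 0) (𝓝 0) :=
      hg.isBigO.trans_tendsto hy2
    have hmem : ∀ᶠ y in 𝓝 (0 : ℝ), g (0, y) ∈ t := hg0 ht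
    have h0t : (0 : ℝ × ℝ × ℝ) ∈ t := mem_of_mem_nhds ht
    have hτb : (fun y : ℝ => τ (g (0, y))) =O[𝓝 (0 : ℝ)] fun y => g (0, y) := by
      apply IsBigO.of_bound K
      filter_upwards [hmem] with y hyt
      have := hK.dist_le_mul _ hyt _ h0t
      rw [hτ0, dist_zero_right, dist_zero_right] at this
      exact this
    have hτc : (fun y : ℝ => τ (g (0, y))) =o[𝓝 (0 : ℝ)] fun y => y ^ 2 :=
      hτb.trans_isLittleO hg
    have := h1.add hτc
    exact this.congr_left fun y => by abel
  rintro (hcr | hreg)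
  · obtain ⟨σ, A, hσ0, hσd, hc⟩ := main crosscap hcr
    have hc' : (fun y : ℝ =>
        (((σ (0, y)).1 : ℝ), ((σ (0, y)).2 ^ 2, (σ (0, y)).1 * (σ (0, y)).2)))
        =o[𝓝 (0 : ℝ)] fun y => y ^ 2 := hc
    have h1 : (fun y : ℝ => (σ (0, y)).1) =o[𝓝 (0 : ℝ)] fun y => y :=
      (o_fst hc').trans_isBigO sq_bigO
    have h2 : (fun y : ℝ => (σ (0, y)).2) =o[𝓝 (0 : ℝ)] fun y => y :=
      o_of_sq (o_fst (o_snd hc'))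
    exact finish_contradiction hσ0 hσd h1 h2
  · obtain ⟨σ, A, hσ0, hσd, hc⟩ := main regularGerm hreg
    have hc' : (fun y : ℝ =>
        (((σ (0, y)).1 : ℝ), ((σ (0, y)).2, (0 : ℝ))))
        =o[𝓝 (0 : ℝ)] fun y => y ^ 2 := hc
    have h1 : (fun y : ℝ => (σ (0, y)).1) =o[𝓝 (0 : ℝ)] fun y => y :=
      (o_fst hc').trans_isBigO sq_bigO
    have h2 : (fun y : ℝ => (σ (0, y)).2) =o[𝓝 (0 : ℝ)] fun y => y :=
      (o_fst (o_snd hc')).trans_isBigO sq_bigO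
    exact finish_contradiction hσ0 hσd h1 h2

/-- The linear shear `(x, y) ↦ (y - c x, x)` of the source. -/
private noncomputable def shearA (c : ℝ) : (ℝ × ℝ) ≃L[ℝ] ℝ × ℝ :=
  { toFun := fun v => (v.2 - c * v.1, v.1)
    invFun := fun u => (u.2, u.1 + c * u.2)
    map_add' := by intro x y; simp [Prod.ext_iff] <;> ring
    map_smul' := by intro r x; simp [Prod.ext_iff, smul_eq_mul] <;> ring
    left_inv := by intro x; simp [Prod.ext_iff] <;> ring
    right_inv := by intro u; simp [Prod.ext_iff] <;> ring
    continuous_toFun :=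
      (continuous_snd.sub (continuous_const.mul continuous_fst)).prodMk continuous_fst
    continuous_invFun :=
      continuous_snd.prodMk (continuous_fst.add (continuous_const.mul continuous_snd)) }

private lemma shearA_apply (c : ℝ) (v : ℝ × ℝ) : shearA c v = (v.2 - c * v.1, v.1) := rfl

/-- The linear shear `(u, s, t) ↦ (u, s, t - c s)` of the target. -/
private noncomputable def shearB (c : ℝ) : (ℝ × ℝ × ℝ) ≃L[ℝ] ℝ × ℝ × ℝ :=
  { toFun := fun v => (v.1, v.2.1, v.2.2 - c * v.2.1)
    invFun := fun u => (u.1, u.2.1, u.2.2 + c * u.2.1)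
    map_add' := by intro x y; simp [Prod.ext_iff] <;> ring
    map_smul' := by intro r x; simp [Prod.ext_iff, smul_eq_mul] <;> ring
    left_inv := by intro x; simp [Prod.ext_iff] <;> ring
    right_inv := by intro u; simp [Prod.ext_iff] <;> ring
    continuous_toFun :=
      continuous_fst.prodMk ((continuous_fst.comp continuous_snd).prodMk
        ((continuous_snd.comp continuous_snd).sub
          (continuous_const.mul (continuous_fst.comp continuous_snd))))
    continuous_invFun :=
      continuous_fst.prodMk ((continuous_fst.comp continuous_snd).prodMk
        ((continuous_snd.comp continuous_snd).add
          (continuous_const.mul (continuous_fst.comp continuous_snd)))) }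

private lemma shearB_apply (c : ℝ) (v : ℝ × ℝ × ℝ) :
    shearB c v = (v.1, v.2.1, v.2.2 - c * v.2.1) := rfl

/-- Parabolic case `j²f = (x², xy)`: the `y`-axis is the unique asymptotic line at the
origin.  Every central projection from a view point on the `y`-axis is worse than the
crosscap (its 2-jet is not `A²`-equivalent to the crosscap nor to a regular germ), while
every other tangent line through the origin carries a view point whose projection is
`A`-equivalent to the crosscap or regular. -/
theorem parabolic_unique_asymptotic_line
    (f₁ f₂ : ℝ × ℝ → ℝ) (hf₁s : ContDiff ℝ (⊤ : ℕ∞) f₁) (hf₂s : ContDiff ℝ (⊤ : ℕ∞) f₂)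
    (hf₁ : (fun v : ℝ × ℝ => f₁ v - v.1 ^ 2)
      =o[𝓝 (0 : ℝ × ℝ)] fun v => ‖v‖ ^ 2)
    (hf₂ : (fun v : ℝ × ℝ => f₂ v - v.1 * v.2)
      =o[𝓝 (0 : ℝ × ℝ)] fun v => ‖v‖ ^ 2) :
    (∀ g : ℝ × ℝ → ℝ × ℝ × ℝ, IsProjFromLine 0 1 f₁ f₂ g →
      ¬ (A2Equiv g crosscap ∨ A2Equiv g regularGerm)) ∧
    (∀ a b : ℝ, a ≠ 0 →
      ∃ g : ℝ × ℝ → ℝ × ℝ × ℝ, IsProjFromLine a b f₁ f₂ g ∧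
        (A2Equiv g crosscap ∨ A2Equiv g regularGerm)) := by
  have hc1 : (fun y : ℝ => f₁ (0, y)) =o[𝓝 (0 : ℝ)] fun y => y ^ 2 :=
    (curve_o hf₁).congr_left fun y => by norm_num
  have hc2 : (fun y : ℝ => f₂ (0, y)) =o[𝓝 (0 : ℝ)] fun y => y ^ 2 :=
    (curve_o hf₂).congr_left fun y => by norm_num
  constructor
  · rintro g (⟨t, ht, rfl⟩ | rfl)
    · -- finite view point (0, t) on the y-axis
      apply no_A2
      have hinv : (fun y : ℝ => (y - t * 1)⁻¹) =O[𝓝 (0 : ℝ)] fun _ => (1 : ℝ) := by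
        have htd : Tendsto (fun y : ℝ => y - t * 1) (𝓝 0) (𝓝 (0 - t * 1)) :=
          (continuous_id.sub continuous_const).tendsto 0
        have : Tendsto (fun y : ℝ => (y - t * 1)⁻¹) (𝓝 0) (𝓝 (0 - t * 1)⁻¹) :=
          htd.inv₀ (by simpa using ht)
        exact this.isBigO_one ℝ
      have hdiv₁ : (fun y : ℝ => f₁ (0, y) * (y - t * 1)⁻¹) =o[𝓝 (0 : ℝ)]
          fun y => y ^ 2 := by
        have := hc1.mul_isBigO hinv
        exact this.congr (fun y => rfl) fun y => by ring
      have hdiv₂ : (fun y : ℝ => f₂ (0, y) * (y - t * 1)⁻¹) =o[𝓝 (0 : ℝ)]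
          fun y => y ^ 2 := by
        have := hc2.mul_isBigO hinv
        exact this.congr (fun y => rfl) fun y => by ring
      have h0 : (fun _ : ℝ => (0 : ℝ)) =o[𝓝 (0 : ℝ)] fun y => y ^ 2 :=
        isLittleO_zero _ _
      refine (h0.prod_left (hdiv₁.prod_left hdiv₂)).congr_left fun y => ?_
      simp [projFin, div_eq_mul_inv]
    · -- view point at infinity on the y-axis
      apply no_A2
      have h0 : (fun _ : ℝ => (0 : ℝ)) =o[𝓝 (0 : ℝ)] fun y => y ^ 2 :=
        isLittleO_zero _ _
      refine (h0.prod_left (hc1.prod_left hc2)).congr_left fun y => ?_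
      simp [projInf]
  · intro a b ha
    refine ⟨projInf a b f₁ f₂, Or.inr rfl, Or.inl ?_⟩
    set c : ℝ := b / a with hc
    unfold A2Equiv
    refine ⟨shearA c, shearB c, shearA c, shearB c, map_zero _, map_zero _,
      ((shearA c : (ℝ × ℝ) →L[ℝ] ℝ × ℝ)).contDiff,
      ((shearB c : (ℝ × ℝ × ℝ) →L[ℝ] ℝ × ℝ × ℝ)).contDiff,
      ((shearA c : (ℝ × ℝ) →L[ℝ] ℝ × ℝ)).hasFDerivAt,
      ((shearB c : (ℝ × ℝ × ℝ) →L[ℝ] ℝ × ℝ × ℝ)).hasFDerivAt, ?_⟩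
    have h2 : (fun v : ℝ × ℝ => v.1 ^ 2 - f₁ v) =o[𝓝 (0 : ℝ × ℝ)] fun v => ‖v‖ ^ 2 :=
      hf₁.neg_left.congr_left fun v => by ring
    have h3 : (fun v : ℝ × ℝ => (v.2 - c * v.1) * v.1 - (f₂ v - c * f₁ v))
        =o[𝓝 (0 : ℝ × ℝ)] fun v => ‖v‖ ^ 2 := by
      have := hf₂.neg_left.add (hf₁.const_mul_left c)
      exact this.congr_left fun v => by ring
    have h0 : (fun _ : ℝ × ℝ => (0 : ℝ)) =o[𝓝 (0 : ℝ × ℝ)] fun v => ‖v‖ ^ 2 :=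
      isLittleO_zero _ _
    refine (h0.prod_left (h2.prod_left h3)).congr_left fun v => ?_
    simp only [crosscap, shearA_apply, shearB_apply, projInf, if_neg ha, Prod.mk_sub_mk]
    rw [Prod.mk.injEq, Prod.mk.injEq]
    refine ⟨by rw [hc]; ring, by ring, by ring⟩
end

section
/- Let f₁ = x² + y² + k₁x²y + Σ_{i+j=4} c_{ij}x^i y^j and f₂ = φ₃ + Σ_{i+j=4} d_{ij}x^i y^j (φ₃ a homogeneous cubic). Then the projective transformation with q₁ = x, q₂ = y, q₃ = z, q₄ = w, p = 1 + c₄₀z transforms the 4-jet of (f₁, f₂) into (x² + y² + k₁x²y + yψ₃, φ₃ + φ₄) for some homogeneous cubic ψ₃ and quartic φ₄; i.e., the x⁴ coefficient of the first component is eliminated. -/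
/-!
Put `c = c₄₀`, `A = x² + y²`, `B = k₁x²y` and `S = Q - cA²`, where `Q` is the quartic part of `f₁`;
`S` is divisible by `y` because `Q` and `cA²` have the same `x⁴` coefficient. Then `g₁ = A + B + S`,
`f₁ = g₁ + cA²` and `p = 1 + c g₁`. For a form `h` of degree `d`, `h(v / p) = h(v) / pᵈ`, so
`h / p - h(v / p) = h (pᵈ - p) / pᵈ⁺¹` has order `d + 2` because `p - 1 = c g₁` has order 2. This
disposes of `B`, `S` and the whole second component. The quadratic part leaves
`A / p - A / p² ≈ c A g₁ ≈ c A²` up to order 5, which cancels the extra `cA²` in `f₁`.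
-/

open Filter Asymptotics Topology

namespace Asymptotics

variable {α : Type*} {l : Filter α} {f g u k : α → ℝ} {m n : ℕ}

lemma IsBigO.mul_pow (hf : f =O[l] fun x => k x ^ m) (hg : g =O[l] fun x => k x ^ n) :
    (fun x => f x * g x) =O[l] fun x => k x ^ (m + n) := by
  simpa only [pow_add] using hf.mul hg

lemma IsBigO.mul_of_tendsto {c : ℝ} (hf : f =O[l] g) (hu : Tendsto u l (𝓝 c)) :
    (fun x => f x * u x) =O[l] g := by
  simpa only [mul_one] using hf.mul (hu.isBigO_one ℝ)

lemma IsBigO.pow_sub_one (h : (fun x => u x - 1) =O[l] g) (hu : Tendsto u l (𝓝 1)) (n : ℕ) :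
    (fun x => u x ^ n - 1) =O[l] g := by
  have hsum : Tendsto (fun x => ∑ i ∈ Finset.range n, u x ^ i) l (𝓝 n) := by
    simpa using tendsto_finsetSum (Finset.range n) fun i _ => hu.pow i
  exact (h.mul_of_tendsto hsum).congr_left fun x => by rw [mul_comm, geom_sum_mul]

end Asymptotics

section NormPow

variable {E : Type*} [NormedAddCommGroup E] {f : E → ℝ} {m n : ℕ}

lemma isLittleO_norm_pow_of_lt (h : m < n) :
    (fun v : E => ‖v‖ ^ n) =o[𝓝 0] fun v => ‖v‖ ^ m :=
  (isLittleO_pow_pow h).comp_tendsto tendsto_norm_zero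

lemma Asymptotics.IsBigO.norm_pow_of_le (hf : f =O[𝓝 0] fun v => ‖v‖ ^ n) (h : m ≤ n) :
    f =O[𝓝 0] fun v => ‖v‖ ^ m := by
  rcases h.lt_or_eq with h | rfl
  · exact hf.trans (isLittleO_norm_pow_of_lt h).isBigO
  · exact hf

lemma Asymptotics.IsBigO.tendsto_zero_of_norm_pow (hf : f =O[𝓝 0] fun v => ‖v‖ ^ n)
    (hn : n ≠ 0) : Tendsto f (𝓝 0) (𝓝 0) :=
  hf.trans_tendsto (by simpa [hn] using (tendsto_norm_zero (E := E)).pow n)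

end NormPow

section Homogeneous

variable {E : Type*} [NormedAddCommGroup E] [NormedSpace ℝ E]

def IsHomogeneousFun (h : E → ℝ) (d : ℕ) : Prop :=
  ∀ (t : ℝ) (v : E), h (t • v) = t ^ d * h v

noncomputable def projectiveDefect (p g f : E → ℝ) (v : E) : ℝ :=
  g v / p v - f ((p v)⁻¹ • v)

lemma projectiveDefect_add (p g g' f f' : E → ℝ) :
    projectiveDefect p (g + g') (f + f') = projectiveDefect p g f + projectiveDefect p g' f' := by
  funext v
  simp only [projectiveDefect, Pi.add_apply]
  ring

namespace IsHomogeneousFun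

variable {h : E → ℝ} {d : ℕ}

lemma isBigO [ProperSpace E] (hh : IsHomogeneousFun h d) (hc : Continuous h) :
    h =O[𝓝 0] fun v => ‖v‖ ^ d := by
  obtain ⟨M, hM⟩ :=
    (isCompact_closedBall (0 : E) 1).exists_bound_of_continuousOn hc.continuousOn
  refine IsBigO.of_bound M (Eventually.of_forall fun v => ?_)
  rcases eq_or_ne v 0 with rfl | hv
  · rcases d with _ | d
    · simpa using hM 0 (by simp)
    · have h0 : h 0 = 0 := by simpa using hh 0 0
      simp [h0]
  · have hunit := hM (‖v‖⁻¹ • v) (by simp [norm_smul, hv])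
    calc ‖h v‖ = ‖h (‖v‖⁻¹ • v)‖ * ‖v‖ ^ d := by
          conv_lhs => rw [← smul_inv_smul₀ (norm_ne_zero_iff.mpr hv) v, hh]
          simp [mul_comm]
      _ ≤ M * ‖‖v‖ ^ d‖ := by simp only [norm_pow, norm_norm]; gcongr

lemma projectiveDefect_self_isBigO (hh : IsHomogeneousFun h d)
    (hO : h =O[𝓝 0] fun v => ‖v‖ ^ d) {u : E → ℝ} {m : ℕ} (hm : m ≠ 0)
    (hu : (fun v => u v - 1) =O[𝓝 0] fun v => ‖v‖ ^ m) :
    projectiveDefect u h h =O[𝓝 0] fun v => ‖v‖ ^ (d + m) := by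
  have hu₁ : Tendsto u (𝓝 0) (𝓝 1) := by
    simpa using (hu.tendsto_zero_of_norm_pow hm).const_add 1
  have hpow : (fun v => u v ^ d - u v) =O[𝓝 0] fun v => ‖v‖ ^ m := by
    simpa using (hu.pow_sub_one hu₁ d).sub hu
  have hinv : Tendsto (fun v => (u v ^ (d + 1))⁻¹) (𝓝 0) (𝓝 1) := by
    simpa using (hu₁.pow (d + 1)).inv₀ (by simp)
  refine ((hO.mul_pow hpow).mul_of_tendsto hinv).congr' ?_ EventuallyEq.rfl
  filter_upwards [hu₁.eventually_ne one_ne_zero] with v hv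
  rw [projectiveDefect, hh, inv_pow]
  field_simp
  ring

lemma projectiveDefect_add_sq_isBigO (hh : IsHomogeneousFun h 2)
    (hO : h =O[𝓝 0] fun v => ‖v‖ ^ 2) {g : E → ℝ} (c : ℝ)
    (hg : (fun v => g v - h v) =O[𝓝 0] fun v => ‖v‖ ^ 3) :
    projectiveDefect (fun v => 1 + c * g v) h (fun v => h v + c * h v ^ 2)
      =O[𝓝 0] fun v => ‖v‖ ^ 5 := by
  have hu : (fun v => (1 + c * g v) - 1) =O[𝓝 0] fun v => ‖v‖ ^ 2 := by
    simpa using ((hO.add (hg.norm_pow_of_le (by norm_num))).const_mul_left c)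
  have hu₁ : Tendsto (fun v => 1 + c * g v) (𝓝 0) (𝓝 1) := by
    simpa using (hu.tendsto_zero_of_norm_pow two_ne_zero).const_add 1
  have hinv : Tendsto (fun v => ((1 + c * g v) ^ 4)⁻¹) (𝓝 0) (𝓝 1) := by
    simpa using (hu₁.pow 4).inv₀ (by simp)
  have hnum : (fun v => c * (h v * (g v - h v)) * (1 + c * g v) ^ 2
      + c * (h v * h v * ((1 + c * g v) ^ 2 - 1))) =O[𝓝 0] fun v => ‖v‖ ^ 5 :=
    (((hO.mul_pow hg).const_mul_left c).mul_of_tendsto (hu₁.pow 2)).add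
      ((((hO.mul_pow hO).mul_pow (hu.pow_sub_one hu₁ 2)).norm_pow_of_le
        (by norm_num)).const_mul_left c)
  refine (hnum.mul_of_tendsto hinv).congr' ?_ EventuallyEq.rfl
  filter_upwards [hu₁.eventually_ne one_ne_zero] with v hv
  simp only [projectiveDefect]
  rw [hh, inv_pow]
  field_simp
  ring

end IsHomogeneousFun

theorem projectiveDefect_normalForm_isBigO [ProperSpace E] {A B S C D : E → ℝ} (c : ℝ)
    (hA : IsHomogeneousFun A 2) (hB : IsHomogeneousFun B 3) (hS : IsHomogeneousFun S 4)
    (hC : IsHomogeneousFun C 3) (hD : IsHomogeneousFun D 4) (hAc : Continuous A)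
    (hBc : Continuous B) (hSc : Continuous S) (hCc : Continuous C) (hDc : Continuous D) :
    projectiveDefect (fun v => 1 + c * (A + B + S) v) (A + B + S)
        ((fun v => A v + c * A v ^ 2) + B + S) =O[𝓝 0] (fun v => ‖v‖ ^ 5) ∧
      projectiveDefect (fun v => 1 + c * (A + B + S) v) (C + D) (C + D)
        =O[𝓝 0] fun v => ‖v‖ ^ 5 := by
  have hAO := hA.isBigO hAc
  have hBO := hB.isBigO hBc
  have hSO := hS.isBigO hSc
  have hBS : (fun v => (A + B + S) v - A v) =O[𝓝 0] fun v => ‖v‖ ^ 3 := by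
    simpa [add_assoc] using hBO.add (hSO.norm_pow_of_le (by norm_num))
  have hu : (fun v => (1 + c * (A + B + S) v) - 1) =O[𝓝 0] fun v => ‖v‖ ^ 2 := by
    simpa using ((hAO.add (hBS.norm_pow_of_le (by norm_num))).const_mul_left c)
  rw [projectiveDefect_add, projectiveDefect_add, projectiveDefect_add]
  exact ⟨((hA.projectiveDefect_add_sq_isBigO hAO c hBS).add
      (hB.projectiveDefect_self_isBigO hBO two_ne_zero hu)).add
      ((hS.projectiveDefect_self_isBigO hSO two_ne_zero hu).norm_pow_of_le (by norm_num)),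
    (hC.projectiveDefect_self_isBigO (hC.isBigO hCc) two_ne_zero hu).add
      ((hD.projectiveDefect_self_isBigO (hD.isBigO hDc) two_ne_zero hu).norm_pow_of_le
        (by norm_num))⟩

end Homogeneous

lemma projectiveDefect_prod_apply (p g f : ℝ × ℝ → ℝ) (v : ℝ × ℝ) :
    projectiveDefect p g f v = g v / p v - f (v.1 / p v, v.2 / p v) := by
  simp only [projectiveDefect, div_eq_inv_mul]
  rfl

/-- Inflection case `Π⁺_I`, 4-jet: for `f₁ = x² + y² + k₁x²y + Σ_{i+j=4} c_{ij}x^iy^j`,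
`f₂ = φ₃ + Σ_{i+j=4} d_{ij}x^iy^j`, the projective transformation with `q₁ = x`, `q₂ = y`,
`q₃ = z`, `q₄ = w`, `p = 1 + c₄₀z` transforms the 4-jet into the form
`(x² + y² + k₁x²y + yψ₃, φ₃ + φ₄)`: the `x⁴` coefficient of the first component is
eliminated. -/
theorem jet4_inflection_plus_normal_form
    (k₁ p30 p21 p12 p03 c40 c31 c22 c13 c04 d40 d31 d22 d13 d04 : ℝ)
    (f₁ f₂ : ℝ × ℝ → ℝ)
    (hf₁ : f₁ = fun v => v.1 ^ 2 + v.2 ^ 2 + k₁ * v.1 ^ 2 * v.2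
      + c40 * v.1 ^ 4 + c31 * v.1 ^ 3 * v.2 + c22 * v.1 ^ 2 * v.2 ^ 2
      + c13 * v.1 * v.2 ^ 3 + c04 * v.2 ^ 4)
    (hf₂ : f₂ = fun v => (p30 * v.1 ^ 3 + p21 * v.1 ^ 2 * v.2
        + p12 * v.1 * v.2 ^ 2 + p03 * v.2 ^ 3)
      + d40 * v.1 ^ 4 + d31 * v.1 ^ 3 * v.2 + d22 * v.1 ^ 2 * v.2 ^ 2
      + d13 * v.1 * v.2 ^ 3 + d04 * v.2 ^ 4) :
    ∃ (s30 s21 s12 s03 q40 q31 q22 q13 q04 : ℝ) (g₁ g₂ P : ℝ × ℝ → ℝ),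
      g₁ = (fun v => v.1 ^ 2 + v.2 ^ 2 + k₁ * v.1 ^ 2 * v.2
        + v.2 * (s30 * v.1 ^ 3 + s21 * v.1 ^ 2 * v.2
          + s12 * v.1 * v.2 ^ 2 + s03 * v.2 ^ 3)) ∧
      g₂ = (fun v => (p30 * v.1 ^ 3 + p21 * v.1 ^ 2 * v.2
          + p12 * v.1 * v.2 ^ 2 + p03 * v.2 ^ 3)
        + q40 * v.1 ^ 4 + q31 * v.1 ^ 3 * v.2 + q22 * v.1 ^ 2 * v.2 ^ 2
        + q13 * v.1 * v.2 ^ 3 + q04 * v.2 ^ 4) ∧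
      P = (fun v => 1 + c40 * g₁ v) ∧
      ((fun v : ℝ × ℝ => g₁ v / P v - f₁ (v.1 / P v, v.2 / P v))
          =o[𝓝 (0 : ℝ × ℝ)] fun v => ‖v‖ ^ 4) ∧
      ((fun v : ℝ × ℝ => g₂ v / P v - f₂ (v.1 / P v, v.2 / P v))
          =o[𝓝 (0 : ℝ × ℝ)] fun v => ‖v‖ ^ 4) := by
  set A : ℝ × ℝ → ℝ := fun v => v.1 ^ 2 + v.2 ^ 2
  set B : ℝ × ℝ → ℝ := fun v => k₁ * v.1 ^ 2 * v.2
  set S : ℝ × ℝ → ℝ := fun v => v.2 * (c31 * v.1 ^ 3 + (c22 - 2 * c40) * v.1 ^ 2 * v.2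
    + c13 * v.1 * v.2 ^ 2 + (c04 - c40) * v.2 ^ 3)
  set C : ℝ × ℝ → ℝ := fun v => p30 * v.1 ^ 3 + p21 * v.1 ^ 2 * v.2 + p12 * v.1 * v.2 ^ 2
    + p03 * v.2 ^ 3
  set D : ℝ × ℝ → ℝ := fun v => d40 * v.1 ^ 4 + d31 * v.1 ^ 3 * v.2
    + d22 * v.1 ^ 2 * v.2 ^ 2 + d13 * v.1 * v.2 ^ 3 + d04 * v.2 ^ 4
  obtain ⟨h₁, h₂⟩ := projectiveDefect_normalForm_isBigO (A := A) (B := B) (S := S) (C := C)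
    (D := D) c40 (fun t v => by simp only [A, Prod.smul_fst, Prod.smul_snd, smul_eq_mul]; ring)
    (fun t v => by simp only [B, Prod.smul_fst, Prod.smul_snd, smul_eq_mul]; ring)
    (fun t v => by simp only [S, Prod.smul_fst, Prod.smul_snd, smul_eq_mul]; ring)
    (fun t v => by simp only [C, Prod.smul_fst, Prod.smul_snd, smul_eq_mul]; ring)
    (fun t v => by simp only [D, Prod.smul_fst, Prod.smul_snd, smul_eq_mul]; ring)
    (by fun_prop) (by fun_prop) (by fun_prop) (by fun_prop) (by fun_prop)
  have ho := isLittleO_norm_pow_of_lt (E := ℝ × ℝ) (by norm_num : 4 < 5)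
  refine ⟨c31, c22 - 2 * c40, c13, c04 - c40, d40, d31, d22, d13, d04, A + B + S, C + D, _,
    funext fun _ => rfl,
    funext fun _ => by simp only [C, D, Pi.add_apply]; ring, rfl,
    (h₁.trans_isLittleO ho).congr_left fun v => ?_,
    (h₂.trans_isLittleO ho).congr_left fun v => ?_⟩
  · rw [projectiveDefect_prod_apply, hf₁]
    simp only [A, B, S, Pi.add_apply]
    ring
  · rw [projectiveDefect_prod_apply, hf₂]
    simp only [C, D, Pi.add_apply]
    ring
end
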